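/- arXiv:1805.01439 — 12 statements merged into one kernel-verified Lean document; each statement's English description precedes it below -/
import Mathlib

section
/- Let L be a finite lattice and M ⊆ L a submodular subset (i.e. for all x, y ∈ M, at least one of x ∨ y and x ∧ y lies in M). Then M is strongly separable: for all a, b ∈ M with a ≤ b there exists z ∈ M such that z lifts a (z ≥ a and for all w ∈ M with w ≥ a we have z ∨ w ∈ M) and z pushes b (z ≤ b and for all w ∈ M with w ≤ b we have z ∧ w ∈ M). -/
/-- A finite lattice with a submodular subset `M` (for all `x y ∈ M`, `x ⊔ y ∈ M` or
`x ⊓ y ∈ M`) is strongly separable: for all `a ≤ b` in `M` there is `z ∈ M` lifting `a`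
and pushing `b`. -/
theorem submodular_subset_strongly_separable {L : Type*} [Lattice L] [Finite L]
    (M : Set L) (hsub : ∀ x ∈ M, ∀ y ∈ M, x ⊔ y ∈ M ∨ x ⊓ y ∈ M) :
    ∀ a ∈ M, ∀ b ∈ M, a ≤ b → ∃ z ∈ M,
      (a ≤ z ∧ ∀ w ∈ M, a ≤ w → z ⊔ w ∈ M) ∧
      (z ≤ b ∧ ∀ w ∈ M, w ≤ b → z ⊓ w ∈ M) := by
  intro a ha b hb hab
  -- `Q` : lifters of `a` lying in `[a, b] ∩ M`
  set Q : Set L := {z | z ∈ M ∧ a ≤ z ∧ z ≤ b ∧ ∀ w ∈ M, a ≤ w → z ⊔ w ∈ M} with hQdef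
  have haQ : a ∈ Q := by
    refine ⟨ha, le_refl a, hab, fun w hw haw => ?_⟩
    simpa [sup_eq_right.mpr haw] using hw
  obtain ⟨q, hqQ, hqmax⟩ :=
    (Finite.to_wellFoundedGT (α := L)).wf.has_min Q ⟨a, haQ⟩
  obtain ⟨hqM, haq, hqb, hqlift⟩ := hqQ
  refine ⟨q, hqM, ⟨haq, hqlift⟩, hqb, ?_⟩
  -- It remains to show `q` pushes `b`.
  by_contra hpush
  push_neg at hpush
  obtain ⟨w0, hw0M, hw0b, hbad0⟩ := hpush
  -- choose a minimal bad witness `u`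
  obtain ⟨u, ⟨huM, hub, hqu⟩, humin⟩ :=
    (Finite.to_wellFoundedLT (α := L)).wf.has_min
      {u | u ∈ M ∧ u ≤ b ∧ q ⊓ u ∉ M} ⟨w0, hw0M, hw0b, hbad0⟩
  -- `q ⊔ u ∈ M` by submodularity
  have hquM : q ⊔ u ∈ M := by
    rcases hsub q hqM u huM with h | h
    · exact h
    · exact absurd h hqu
  have hunotle : ¬ u ≤ q := by
    intro h
    exact hqu (by simpa [inf_eq_right.mpr h] using huM)
  have hqlt : q < q ⊔ u := left_lt_sup.mpr hunotle
  -- `q ⊔ u ∉ Q` by maximality of `q`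
  have hnotQ : q ⊔ u ∉ Q := fun hmem => hqmax _ hmem hqlt
  -- hence `q ⊔ u` fails to lift `a`
  have hfail : ∃ v ∈ M, a ≤ v ∧ (q ⊔ u) ⊔ v ∉ M := by
    by_contra hc
    push_neg at hc
    exact hnotQ ⟨hquM, haq.trans le_sup_left, sup_le hqb hub,
      fun w hw haw => hc w hw haw⟩
  obtain ⟨v, hvM, hav, hruv⟩ := hfail
  have hqvM : q ⊔ v ∈ M := hqlift v hvM hav
  have hkey : u ⊔ (q ⊔ v) ∉ M := by
    have : u ⊔ (q ⊔ v) = (q ⊔ u) ⊔ v := by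
      simp [sup_comm, sup_left_comm, sup_assoc]
    rw [this]
    exact hruv
  have hsM : u ⊓ (q ⊔ v) ∈ M := by
    rcases hsub u huM (q ⊔ v) hqvM with h | h
    · exact absurd h hkey
    · exact h
  -- the case `u ≤ q ⊔ v` is impossible
  have hune : ¬ u ≤ q ⊔ v := by
    intro h
    apply hkey
    simpa [sup_eq_right.mpr h] using hqvM
  have hslt : u ⊓ (q ⊔ v) < u :=
    lt_of_le_of_ne inf_le_left (fun h => hune (inf_eq_left.mp h))
  -- minimality of `u` forces `q ⊓ (u ⊓ (q ⊔ v)) ∈ M`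
  have hsgood : q ⊓ (u ⊓ (q ⊔ v)) ∈ M := by
    by_contra hc
    exact humin _ ⟨hsM, inf_le_left.trans hub, hc⟩ hslt
  -- but `q ⊓ (u ⊓ (q ⊔ v)) = q ⊓ u`
  have : q ⊓ (u ⊓ (q ⊔ v)) = q ⊓ u := by
    rw [inf_comm u (q ⊔ v), ← inf_assoc, inf_sup_self]
  rw [this] at hsgood
  exact hqu hsgood
end

section
/- In a distributive lattice with an order-reversing involution * (x ≤ y implies y* ≤ x*), if u ≤ v and v ∨ w is co-small (i.e. (v ∨ w)* ≤ v ∨ w), then v ∨ (w ∧ u*) is also co-small. -/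
theorem star_sup_aux {α : Type*} [DistribLattice α] (star : α → α)
    (hinv : ∀ x, star (star x) = x) (hanti : ∀ x y, x ≤ y → star y ≤ star x)
    (x y : α) : star (x ⊔ y) = star x ⊓ star y := by
  apply le_antisymm
  · exact le_inf (hanti _ _ le_sup_left) (hanti _ _ le_sup_right)
  · have h : x ⊔ y ≤ star (star x ⊓ star y) := by
      apply sup_le
      · calc x = star (star x) := (hinv x).symm
          _ ≤ star (star x ⊓ star y) := hanti _ _ inf_le_left
      · calc y = star (star y) := (hinv y).symm
          _ ≤ star (star x ⊓ star y) := hanti _ _ inf_le_right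
    calc star x ⊓ star y = star (star (star x ⊓ star y)) := (hinv _).symm
      _ ≤ star (x ⊔ y) := hanti _ _ h

/-- In a distributive lattice with an order-reversing involution `star`, if `u ≤ v` and
`v ⊔ w` is co-small then `v ⊔ (w ⊓ star u)` is co-small. -/
theorem push_cosmall {α : Type*} [DistribLattice α] (star : α → α)
    (hinv : ∀ x, star (star x) = x) (hanti : ∀ x y, x ≤ y → star y ≤ star x)
    (u v w : α) (huv : u ≤ v) (hco : star (v ⊔ w) ≤ v ⊔ w) :
    star (v ⊔ (w ⊓ star u)) ≤ v ⊔ (w ⊓ star u) := by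
  have hsinf : star (w ⊓ star u) = star w ⊔ u := by
    have h : star (star w ⊔ u) = w ⊓ star u := by
      rw [star_sup_aux star hinv hanti, hinv]
    calc star (w ⊓ star u) = star (star (star w ⊔ u)) := by rw [h]
      _ = star w ⊔ u := hinv _
  rw [star_sup_aux star hinv hanti, hsinf, sup_inf_left, inf_sup_left]
  have h1 : star v ⊓ star w ≤ (v ⊔ w) ⊓ (v ⊔ star u) := by
    rw [← star_sup_aux star hinv hanti]
    exact le_inf hco (le_trans (le_trans (hanti _ _ le_sup_left)
      (hanti _ _ huv)) le_sup_right)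
  have h2 : star v ⊓ u ≤ (v ⊔ w) ⊓ (v ⊔ star u) :=
    le_inf (le_trans inf_le_right (le_trans huv le_sup_left))
      (le_trans inf_le_right (le_trans huv le_sup_left))
  exact sup_le h1 h2
end

section
/- Let S be a separation system (a poset with order-reversing involution *), and let O be a collection of consistent orientations of S. Let N ⊆ S be an inclusion-minimal nested set of unoriented separations that distinguishes O. Then for every t ∈ N there is a unique pair of orientations O₁, O₂ ∈ O that are distinguished by t and by no other element of N. -/
open Set

section Aux
variable {α : Type*} [PartialOrder α] {star : α → α}

private lemma pair_star (hinv : ∀ x, star (star x) = x) (x : α) :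
    ({star x, star (star x)} : Set α) = {x, star x} := by
  rw [hinv x]; exact Set.pair_comm _ _

private lemma inter_pair_eq_iff
    {O O' : Set α} {s : α}
    (h1 : s ∈ O ∨ star s ∈ O) (h2 : ¬(s ∈ O ∧ star s ∈ O ∧ s ≠ star s))
    (h1' : s ∈ O' ∨ star s ∈ O') (h2' : ¬(s ∈ O' ∧ star s ∈ O' ∧ s ≠ star s)) :
    O ∩ ({s, star s} : Set α) = O' ∩ ({s, star s} : Set α) ↔ (s ∈ O ↔ s ∈ O') := by
  constructor
  · intro h
    constructor
    · intro hs
      have : s ∈ O' ∩ ({s, star s} : Set α) := h ▸ ⟨hs, by simp⟩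
      exact this.1
    · intro hs
      have : s ∈ O ∩ ({s, star s} : Set α) := h.symm ▸ ⟨hs, by simp⟩
      exact this.1
  · intro hiff
    by_cases hss : s = star s
    · have hsO : s ∈ O := by
        rcases h1 with h | h
        · exact h
        · rw [hss]; exact h
      have hsO' : s ∈ O' := by
        rcases h1' with h | h
        · exact h
        · rw [hss]; exact h
      ext x
      simp only [mem_inter_iff, mem_insert_iff, mem_singleton_iff, ← hss]
      constructor
      · rintro ⟨_, rfl | rfl⟩ <;> exact ⟨hsO', Or.inl rfl⟩
      · rintro ⟨_, rfl | rfl⟩ <;> exact ⟨hsO, Or.inl rfl⟩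
    · have keyO : star s ∈ O ↔ s ∉ O :=
        ⟨fun h hs => h2 ⟨hs, h, hss⟩, fun h => h1.resolve_left h⟩
      have keyO' : star s ∈ O' ↔ s ∉ O' :=
        ⟨fun h hs => h2' ⟨hs, h, hss⟩, fun h => h1'.resolve_left h⟩
      ext x
      simp only [mem_inter_iff, mem_insert_iff, mem_singleton_iff]
      constructor
      · rintro ⟨hx, rfl | rfl⟩
        · exact ⟨hiff.1 hx, Or.inl rfl⟩
        · exact ⟨keyO'.2 fun hs => (keyO.1 hx) (hiff.2 hs), Or.inr rfl⟩
      · rintro ⟨hx, rfl | rfl⟩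
        · exact ⟨hiff.2 hx, Or.inl rfl⟩
        · exact ⟨keyO.2 fun hs => (keyO'.1 hx) (hiff.1 hs), Or.inr rfl⟩

private lemma core_contra
    (hinv : ∀ x, star (star x) = x)
    {𝒪 : Set (Set α)}
    (hcons : ∀ O ∈ 𝒪, ∀ r s : α, s ∈ O → r ≤ s →
        ({r, star r} : Set α) ≠ {s, star s} → star r ∉ O)
    {t u : α}
    (hnest : ∃ a ∈ ({t, star t} : Set α), ∃ b ∈ ({u, star u} : Set α), a ≤ b)
    (hne : ({u, star u} : Set α) ≠ ({t, star t} : Set α))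
    {P₁ P₂ P₃ P₄ : Set α}
    (h₁ : P₁ ∈ 𝒪) (h₂ : P₂ ∈ 𝒪) (h₃ : P₃ ∈ 𝒪) (h₄ : P₄ ∈ 𝒪)
    (ht₁ : t ∈ P₁) (hu₁ : u ∈ P₁)
    (ht₂ : star t ∈ P₂) (hu₂ : u ∈ P₂)
    (ht₃ : t ∈ P₃) (hu₃ : star u ∈ P₃)
    (ht₄ : star t ∈ P₄) (hu₄ : star u ∈ P₄) : False := by
  obtain ⟨a, ha, b, hb, hab⟩ := hnest
  have hne' : ({t, star t} : Set α) ≠ ({u, star u} : Set α) := fun h => hne h.symm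
  simp only [mem_insert_iff, mem_singleton_iff] at ha hb
  rcases ha with rfl | rfl <;> rcases hb with rfl | rfl
  · exact hcons P₂ h₂ _ _ hu₂ hab hne' ht₂
  · exact hcons P₄ h₄ _ _ hu₄ hab (by rw [pair_star hinv]; exact hne') ht₄
  · have := hcons P₁ h₁ _ _ hu₁ hab (by rw [pair_star hinv]; exact hne')
    rw [hinv] at this
    exact this ht₁
  · have := hcons P₃ h₃ _ _ hu₃ hab
      (by rw [pair_star hinv, pair_star hinv]; exact hne')
    rw [hinv] at this
    exact this ht₃

end Aux

/-- Lemma 3.3 (unique pair distinguished): if `N` is an inclusion-minimal nested set of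
(unoriented) separations distinguishing a set `𝒪` of consistent orientations of a
separation system, then every `t ∈ N` distinguishes a unique pair of orientations in `𝒪`
that no other element of `N` distinguishes.

Separations are elements of a poset `α` with order-reversing involution `star`; the
unoriented separation underlying `s` is the set `{s, star s}`.  Sets of unoriented
separations are modelled as star-closed subsets of `α`. -/
theorem unique_pair_distinguished {α : Type*} [PartialOrder α] (star : α → α)
    (hinv : ∀ x, star (star x) = x) (hanti : ∀ x y : α, x ≤ y → star y ≤ star x)
    (S : Set α) (hS : ∀ s ∈ S, star s ∈ S)
    (𝒪 : Set (Set α))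
    -- each `O ∈ 𝒪` is an orientation of `S` ...
    (horient : ∀ O ∈ 𝒪, O ⊆ S ∧ ∀ s ∈ S,
        (s ∈ O ∨ star s ∈ O) ∧ ¬(s ∈ O ∧ star s ∈ O ∧ s ≠ star s))
    -- ... which is consistent:
    (hcons : ∀ O ∈ 𝒪, ∀ r s : α, s ∈ O → r ≤ s →
        ({r, star r} : Set α) ≠ {s, star s} → star r ∉ O)
    -- `N` is a star-closed (i.e. unoriented) subset of `S` ...
    (N : Set α) (hNS : N ⊆ S) (hNstar : ∀ s ∈ N, star s ∈ N)
    -- ... which is nested ...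
    (hNnested : ∀ r ∈ N, ∀ s ∈ N,
        ∃ r' ∈ ({r, star r} : Set α), ∃ s' ∈ ({s, star s} : Set α), r' ≤ s')
    -- ... distinguishes `𝒪` ...
    (hdist : ∀ O₁ ∈ 𝒪, ∀ O₂ ∈ 𝒪, O₁ ≠ O₂ →
        ∃ t ∈ N, O₁ ∩ ({t, star t} : Set α) ≠ O₂ ∩ ({t, star t} : Set α))
    -- ... and is inclusion-minimal with this property:
    (hmin : ∀ N' ⊆ N, (∀ s ∈ N', star s ∈ N') →
        (∀ O₁ ∈ 𝒪, ∀ O₂ ∈ 𝒪, O₁ ≠ O₂ →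
          ∃ t ∈ N', O₁ ∩ ({t, star t} : Set α) ≠ O₂ ∩ ({t, star t} : Set α)) → N' = N) :
    ∀ t ∈ N, ∃ O₁ ∈ 𝒪, ∃ O₂ ∈ 𝒪, O₁ ≠ O₂ ∧
      O₁ ∩ ({t, star t} : Set α) ≠ O₂ ∩ ({t, star t} : Set α) ∧
      (∀ u ∈ N, ({u, star u} : Set α) ≠ {t, star t} →
        O₁ ∩ ({u, star u} : Set α) = O₂ ∩ ({u, star u} : Set α)) ∧
      ∀ O₁' ∈ 𝒪, ∀ O₂' ∈ 𝒪, O₁' ≠ O₂' →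
        O₁' ∩ ({t, star t} : Set α) ≠ O₂' ∩ ({t, star t} : Set α) →
        (∀ u ∈ N, ({u, star u} : Set α) ≠ {t, star t} →
          O₁' ∩ ({u, star u} : Set α) = O₂' ∩ ({u, star u} : Set α)) →
        ({O₁', O₂'} : Set (Set α)) = {O₁, O₂} := by
  intro t ht
  have htS : t ∈ S := hNS ht
  have hex : ∀ O ∈ 𝒪, ∀ s ∈ S,
      (s ∈ O ∨ star s ∈ O) ∧ ¬(s ∈ O ∧ star s ∈ O ∧ s ≠ star s) :=
    fun O hO => (horient O hO).2
  -- Existence: remove `t` from `N`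
  set N' : Set α := {s | s ∈ N ∧ ({s, star s} : Set α) ≠ ({t, star t} : Set α)} with hN'def
  have hN'sub : N' ⊆ N := fun s hs => hs.1
  have hN'star : ∀ s ∈ N', star s ∈ N' := by
    rintro s ⟨hsN, hsne⟩
    exact ⟨hNstar s hsN, by rw [pair_star hinv]; exact hsne⟩
  have htN' : t ∉ N' := fun h => h.2 rfl
  have hnotdist : ¬ (∀ O₁ ∈ 𝒪, ∀ O₂ ∈ 𝒪, O₁ ≠ O₂ →
      ∃ s ∈ N', O₁ ∩ ({s, star s} : Set α) ≠ O₂ ∩ ({s, star s} : Set α)) :=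
    fun h => htN' ((hmin N' hN'sub hN'star h) ▸ ht)
  push_neg at hnotdist
  obtain ⟨O₁, hO₁, O₂, hO₂, hne12, hagree⟩ := hnotdist
  have hdt : O₁ ∩ ({t, star t} : Set α) ≠ O₂ ∩ ({t, star t} : Set α) := by
    obtain ⟨t', ht'N, ht'dist⟩ := hdist O₁ hO₁ O₂ hO₂ hne12
    by_cases h : ({t', star t'} : Set α) = ({t, star t} : Set α)
    · rw [h] at ht'dist; exact ht'dist
    · exact absurd (hagree t' ⟨ht'N, h⟩) ht'dist
  have hEt1 := hex O₁ hO₁ t htS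
  have hEt2 := hex O₂ hO₂ t htS
  have hni : ¬(t ∈ O₁ ↔ t ∈ O₂) :=
    fun h => hdt ((inter_pair_eq_iff hEt1.1 hEt1.2 hEt2.1 hEt2.2).2 h)
  have hts : t ≠ star t := by
    intro h
    have a : t ∈ O₁ := by
      rcases hEt1.1 with x | x
      · exact x
      · rw [h]; exact x
    have b : t ∈ O₂ := by
      rcases hEt2.1 with x | x
      · exact x
      · rw [h]; exact x
    exact hni (iff_of_true a b)
  obtain ⟨P, hP, Q, hQ, hPQ, htP, htQ, hPQagree⟩ :
      ∃ P ∈ 𝒪, ∃ Q ∈ 𝒪, P ≠ Q ∧ t ∈ P ∧ star t ∈ Q ∧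
        ∀ s ∈ N', P ∩ ({s, star s} : Set α) = Q ∩ ({s, star s} : Set α) := by
    by_cases htO₁ : t ∈ O₁
    · have htO₂ : t ∉ O₂ := fun h => hni (iff_of_true htO₁ h)
      exact ⟨O₁, hO₁, O₂, hO₂, hne12, htO₁, hEt2.1.resolve_left htO₂, hagree⟩
    · have htO₂ : t ∈ O₂ := by
        by_contra h; exact hni (iff_of_false htO₁ h)
      exact ⟨O₂, hO₂, O₁, hO₁, hne12.symm, htO₂, hEt1.1.resolve_left htO₁,
        fun s hs => (hagree s hs).symm⟩
  have hexPt := hex P hP t htS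
  have hexQt := hex Q hQ t htS
  have hstP : star t ∉ P := fun h => hexPt.2 ⟨htP, h, hts⟩
  have htQn : t ∉ Q := fun h => hexQt.2 ⟨h, htQ, hts⟩
  have hPQt : P ∩ ({t, star t} : Set α) ≠ Q ∩ ({t, star t} : Set α) := fun heq =>
    htQn (((inter_pair_eq_iff hexPt.1 hexPt.2 hexQt.1 hexQt.2).1 heq).1 htP)
  refine ⟨P, hP, Q, hQ, hPQ, hPQt, fun u hu hune => hPQagree u ⟨hu, hune⟩, ?_⟩
  -- Uniqueness
  intro O₁' hO₁' O₂' hO₂' hne' hd' hag'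
  have hE1' := hex O₁' hO₁' t htS
  have hE2' := hex O₂' hO₂' t htS
  have hni' : ¬(t ∈ O₁' ↔ t ∈ O₂') :=
    fun h => hd' ((inter_pair_eq_iff hE1'.1 hE1'.2 hE2'.1 hE2'.2).2 h)
  obtain ⟨P', hP', Q', hQ', hPQ', htP', htQ', hswap, hPQagree'⟩ :
      ∃ P' ∈ 𝒪, ∃ Q' ∈ 𝒪, P' ≠ Q' ∧ t ∈ P' ∧ star t ∈ Q' ∧
        ({O₁', O₂'} : Set (Set α)) = {P', Q'} ∧
        ∀ s ∈ N, ({s, star s} : Set α) ≠ ({t, star t} : Set α) →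
          P' ∩ ({s, star s} : Set α) = Q' ∩ ({s, star s} : Set α) := by
    by_cases htO₁' : t ∈ O₁'
    · have htO₂' : t ∉ O₂' := fun h => hni' (iff_of_true htO₁' h)
      exact ⟨O₁', hO₁', O₂', hO₂', hne', htO₁', hE2'.1.resolve_left htO₂', rfl, hag'⟩
    · have htO₂' : t ∈ O₂' := by
        by_contra h; exact hni' (iff_of_false htO₁' h)
      exact ⟨O₂', hO₂', O₁', hO₁', hne'.symm, htO₂', hE1'.1.resolve_left htO₁',
        Set.pair_comm _ _, fun s hs h => (hag' s hs h).symm⟩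
  have hexP't := hex P' hP' t htS
  have hexQ't := hex Q' hQ' t htS
  have hstP' : star t ∉ P' := fun h => hexP't.2 ⟨htP', h, hts⟩
  have htQ'n : t ∉ Q' := fun h => hexQ't.2 ⟨h, htQ', hts⟩
  -- Step 1: P' = P
  have hPeq : P' = P := by
    by_contra hPP'
    obtain ⟨u, huN, hud⟩ := hdist P hP P' hP' (fun h => hPP' h.symm)
    have huS : u ∈ S := hNS huN
    have hexPu := hex P hP u huS
    have hexQu := hex Q hQ u huS
    have hexP'u := hex P' hP' u huS
    have hexQ'u := hex Q' hQ' u huS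
    have hut : ({u, star u} : Set α) ≠ ({t, star t} : Set α) := by
      intro h
      rw [h] at hud
      exact hud ((inter_pair_eq_iff hexPt.1 hexPt.2 hexP't.1 hexP't.2).2
        (iff_of_true htP htP'))
    have hniu : ¬(u ∈ P ↔ u ∈ P') :=
      fun h => hud ((inter_pair_eq_iff hexPu.1 hexPu.2 hexP'u.1 hexP'u.2).2 h)
    have hus : u ≠ star u := by
      intro h
      have a : u ∈ P := by
        rcases hexPu.1 with x | x
        · exact x
        · rw [h]; exact x
      have b : u ∈ P' := by
        rcases hexP'u.1 with x | x
        · exact x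
        · rw [h]; exact x
      exact hniu (iff_of_true a b)
    have hPQu : u ∈ P ↔ u ∈ Q :=
      (inter_pair_eq_iff hexPu.1 hexPu.2 hexQu.1 hexQu.2).1 (hPQagree u ⟨huN, hut⟩)
    have hPQu' : u ∈ P' ↔ u ∈ Q' :=
      (inter_pair_eq_iff hexP'u.1 hexP'u.2 hexQ'u.1 hexQ'u.2).1 (hPQagree' u huN hut)
    by_cases huP : u ∈ P
    · have huP' : u ∉ P' := fun h => hniu (iff_of_true huP h)
      have hsuP' : star u ∈ P' := hexP'u.1.resolve_left huP'
      have huQ : u ∈ Q := hPQu.1 huP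
      have huQ' : u ∉ Q' := fun h => huP' (hPQu'.2 h)
      have hsuQ' : star u ∈ Q' := hexQ'u.1.resolve_left huQ'
      exact core_contra hinv hcons (hNnested t ht u huN) hut hP hQ hP' hQ'
        htP huP htQ huQ htP' hsuP' htQ' hsuQ'
    · have huP' : u ∈ P' := by
        by_contra h; exact hniu (iff_of_false huP h)
      have hsuP : star u ∈ P := hexPu.1.resolve_left huP
      have huQ' : u ∈ Q' := hPQu'.1 huP'
      have huQ : u ∉ Q := fun h => huP (hPQu.2 h)
      have hsuQ : star u ∈ Q := hexQu.1.resolve_left huQ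
      exact core_contra hinv hcons (hNnested t ht u huN) hut hP' hQ' hP hQ
        htP' huP' htQ' huQ' htP hsuP htQ hsuQ
  -- Step 2: Q' = Q
  have hQeq : Q' = Q := by
    by_contra hQQ'
    obtain ⟨u, huN, hud⟩ := hdist Q hQ Q' hQ' (fun h => hQQ' h.symm)
    have huS : u ∈ S := hNS huN
    have hexQu := hex Q hQ u huS
    have hexQ'u := hex Q' hQ' u huS
    have hut : ({u, star u} : Set α) ≠ ({t, star t} : Set α) := by
      intro h
      rw [h] at hud
      exact hud ((inter_pair_eq_iff hexQt.1 hexQt.2 hexQ't.1 hexQ't.2).2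
        (iff_of_false htQn htQ'n))
    apply hud
    calc Q ∩ ({u, star u} : Set α) = P ∩ ({u, star u} : Set α) :=
          (hPQagree u ⟨huN, hut⟩).symm
      _ = P' ∩ ({u, star u} : Set α) := by rw [hPeq]
      _ = Q' ∩ ({u, star u} : Set α) := hPQagree' u huN hut
  rw [hswap, hPeq, hQeq]
end

section
/- Every submodular separation system S⃗ in a universe U contains a nested subset of separations that distinguishes any given finite set Π of profiles of S. -/
/-!
Distinguishing separations are added one pair of profiles `P`, `Q` at a time, keeping the set
`N` nested. To add a separation `s` with `s ∈ P` and `s* ∈ Q`, induct on the number of elements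
of `N` crossing `s`. Among them pick `t` whose orientation `τ ∈ P` is minimal; `τ ∈ Q` too, since
otherwise `N` already distinguishes `P` and `Q`. If a corner `s ∨ τ` or `s* ∨ τ` lies in `S`, it
distinguishes `P` and `Q` as well and, by the fish lemma, crosses fewer elements of `N` than `s`.
Otherwise submodularity puts the opposite corners `s ∨ τ*` and `s* ∨ τ*` into `S`. By the
minimality of `τ` they are nested with all of `N`, and any two profiles distinguished by `t` are
distinguished by one of them; so replacing `t` by these two corners lowers the number of
separations crossing `s` without losing any distinction.
-/

open Function

namespace AbstractSeparation

section Orientations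

variable {α : Type*} {star : α → α} {P Q : Set α} {a u x : α}

def Distinguishes (star : α → α) (u : α) (P Q : Set α) : Prop :=
  (u ∈ P ∧ star u ∈ Q) ∨ (u ∈ Q ∧ star u ∈ P)

lemma pair_eq_of_mem (hinv : Involutive star) (hx : x ∈ ({a, star a} : Set α)) :
    ({x, star x} : Set α) = {a, star a} := by
  rcases hx with rfl | rfl
  · rfl
  · rw [hinv, Set.pair_comm]

lemma distinguishes_comm : Distinguishes star u P Q ↔ Distinguishes star u Q P :=
  or_comm

lemma distinguishes_congr (hinv : Involutive star) (hx : x ∈ ({u, star u} : Set α)) :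
    Distinguishes star x P Q ↔ Distinguishes star u P Q := by
  rcases hx with rfl | rfl
  · rfl
  · unfold Distinguishes
    rw [hinv]
    tauto

end Orientations

section Preorder

variable {α : Type*} [Preorder α] {star : α → α} {a b c x y : α}

def Nested (star : α → α) (a b : α) : Prop :=
  ∃ a' ∈ ({a, star a} : Set α), ∃ b' ∈ ({b, star b} : Set α), a' ≤ b'

lemma le_star_comm (hinv : Involutive star) (hanti : Antitone star) :
    a ≤ star b ↔ b ≤ star a :=
  ⟨fun h => hinv b ▸ hanti h, fun h => hinv a ▸ hanti h⟩

lemma star_le_comm (hinv : Involutive star) (hanti : Antitone star) :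
    star a ≤ b ↔ star b ≤ a :=
  ⟨fun h => hinv a ▸ hanti h, fun h => hinv b ▸ hanti h⟩

lemma nested_of_le (h : a ≤ b) : Nested star a b :=
  ⟨a, Set.mem_insert _ _, b, Set.mem_insert _ _, h⟩

lemma nested_of_le_star (h : a ≤ star b) : Nested star a b :=
  ⟨a, Set.mem_insert _ _, star b, Set.mem_insert_of_mem _ rfl, h⟩

lemma nested_self (a : α) : Nested star a a :=
  nested_of_le le_rfl

lemma nested_congr (hinv : Involutive star) (hx : x ∈ ({a, star a} : Set α))
    (hy : y ∈ ({b, star b} : Set α)) : Nested star x y ↔ Nested star a b := by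
  unfold Nested
  rw [pair_eq_of_mem hinv hx, pair_eq_of_mem hinv hy]

lemma nested_star_left (hinv : Involutive star) : Nested star (star a) b ↔ Nested star a b :=
  nested_congr hinv (Set.mem_insert_of_mem _ rfl) (Set.mem_insert _ _)

lemma nested_star_right (hinv : Involutive star) : Nested star a (star b) ↔ Nested star a b :=
  nested_congr hinv (Set.mem_insert _ _) (Set.mem_insert_of_mem _ rfl)

lemma nested_iff (hinv : Involutive star) (hanti : Antitone star) :
    Nested star a b ↔ a ≤ b ∨ star a ≤ b ∨ b ≤ a ∨ b ≤ star a := by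
  constructor
  · rintro ⟨a', ha', b', hb', h⟩
    rcases ha' with rfl | rfl <;> rcases hb' with rfl | rfl
    · exact Or.inl h
    · exact Or.inr <| Or.inr <| Or.inr <| (le_star_comm hinv hanti).1 h
    · exact Or.inr <| Or.inl h
    · exact Or.inr <| Or.inr <| Or.inl <| by
        simpa only [hinv b] using (star_le_comm hinv hanti).1 h
  · rintro (h | h | h | h)
    · exact nested_of_le h
    · exact ⟨star a, Set.mem_insert_of_mem _ rfl, b, Set.mem_insert _ _, h⟩
    · exact ⟨star a, Set.mem_insert_of_mem _ rfl, star b, Set.mem_insert_of_mem _ rfl, hanti h⟩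
    · exact nested_of_le_star ((le_star_comm hinv hanti).2 h)

lemma nested_comm (hinv : Involutive star) (hanti : Antitone star) :
    Nested star a b ↔ Nested star b a := by
  rw [nested_iff hinv hanti, nested_iff hinv hanti, star_le_comm hinv hanti,
    le_star_comm hinv hanti]
  tauto

lemma notMem_pair_of_le (h : ¬Nested star y x) (hy : y ≤ c) : c ∉ ({x, star x} : Set α) :=
  fun hc => h ⟨y, Set.mem_insert _ _, c, hc, hy⟩

lemma pairwise_nested_insert (hinv : Involutive star) (hanti : Antitone star) {N : Set α}
    (hN : N.Pairwise (Nested star)) (ha : ∀ u ∈ N, Nested star u a) :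
    (insert a N).Pairwise (Nested star) :=
  hN.insert fun u hu _ => ⟨(nested_comm hinv hanti).1 (ha u hu), ha u hu⟩

open Classical in
noncomputable def crossers (star : α → α) (s : α) (N : Finset α) : Finset α :=
  N.filter fun u => ¬Nested star s u

def crossingOrientations (star : α → α) (P : Set α) (s : α) (N : Finset α) : Set α :=
  {v | v ∈ P ∧ ∃ u ∈ crossers star s N, v ∈ ({u, star u} : Set α)}

lemma mem_crossers {s u : α} {N : Finset α} :
    u ∈ crossers star s N ↔ u ∈ N ∧ ¬Nested star s u := by
  classical
  simp [crossers]

lemma nested_of_crossers_eq_empty {s u : α} {N : Finset α} (hcr : crossers star s N = ∅)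
    (hu : u ∈ N) : Nested star s u :=
  by_contra fun h => Finset.eq_empty_iff_forall_notMem.1 hcr u (mem_crossers.2 ⟨hu, h⟩)

end Preorder

variable {α : Type*} [Lattice α] {star : α → α}

lemma star_inf (hinv : Involutive star) (hanti : Antitone star) {a b : α} :
    star (a ⊓ b) = star a ⊔ star b :=
  le_antisymm
    ((star_le_comm hinv hanti).1 (le_inf ((star_le_comm hinv hanti).1 le_sup_left)
      ((star_le_comm hinv hanti).1 le_sup_right)))
    (sup_le (hanti inf_le_left) (hanti inf_le_right))

lemma nested_sup_of_not_nested (hinv : Involutive star) (hanti : Antitone star) {a b u : α}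
    (hab : ¬Nested star a b) (ha : Nested star u a) (hb : Nested star u b) :
    Nested star u (a ⊔ b) := by
  rw [nested_iff hinv hanti] at ha hb ⊢
  by_cases hbelow : u ≤ a ∨ star u ≤ a ∨ u ≤ b ∨ star u ≤ b
  · rcases hbelow with h | h | h | h
    · exact Or.inl (h.trans le_sup_left)
    · exact Or.inr <| Or.inl (h.trans le_sup_left)
    · exact Or.inl (h.trans le_sup_right)
    · exact Or.inr <| Or.inl (h.trans le_sup_right)
  have ha' : a ≤ u ∨ a ≤ star u := by tauto
  have hb' : b ≤ u ∨ b ≤ star u := by tauto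
  rcases ha' with ha' | ha' <;> rcases hb' with hb' | hb'
  · exact Or.inr <| Or.inr <| Or.inl (sup_le ha' hb')
  · exact absurd (nested_of_le_star (ha'.trans ((le_star_comm hinv hanti).1 hb'))) hab
  · exact absurd ((nested_iff hinv hanti).2 <| Or.inr <| Or.inr <| Or.inr <|
      hb'.trans ((le_star_comm hinv hanti).1 ha')) hab
  · exact Or.inr <| Or.inr <| Or.inr (sup_le ha' hb')

structure IsProfile (star : α → α) (S P : Set α) : Prop where
  subset : P ⊆ S
  orient : ∀ s ∈ S, (s ∈ P ∨ star s ∈ P) ∧ ¬(s ∈ P ∧ star s ∈ P ∧ s ≠ star s)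
  consistent : ∀ r s : α, s ∈ P → r ≤ s → ({r, star r} : Set α) ≠ {s, star s} → star r ∉ P
  star_sup_notMem : ∀ s ∈ P, ∀ t ∈ P, star (s ⊔ t) ∉ P

def distinguishedPairs (star : α → α) (S : Set α) (N : Finset α) : Set (Set α × Set α) :=
  {p | IsProfile star S p.1 ∧ IsProfile star S p.2 ∧ ∃ u ∈ N, Distinguishes star u p.1 p.2}

lemma distinguishedPairs_mono {S : Set α} {N N' : Finset α} (h : N ⊆ N') :
    distinguishedPairs star S N ⊆ distinguishedPairs star S N' :=
  fun _ ⟨hR, hR', u, hu, hd⟩ => ⟨hR, hR', u, h hu, hd⟩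

section Profile

variable {S P Q R : Set α} {a b c s x τ σ : α}

lemma IsProfile.mem_or_star_mem (hP : IsProfile star S P) (hs : s ∈ S) : s ∈ P ∨ star s ∈ P :=
  (hP.orient s hs).1

lemma IsProfile.exists_mem_pair (hP : IsProfile star S P) (hs : s ∈ S) :
    ∃ v ∈ ({s, star s} : Set α), v ∈ P :=
  (hP.mem_or_star_mem hs).elim (fun h => ⟨s, Set.mem_insert _ _, h⟩)
    (fun h => ⟨star s, Set.mem_insert_of_mem _ rfl, h⟩)

lemma IsProfile.sup_mem (hP : IsProfile star S P) (ha : a ∈ P) (hb : b ∈ P) (hab : a ⊔ b ∈ S) :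
    a ⊔ b ∈ P :=
  (hP.mem_or_star_mem hab).resolve_right (hP.star_sup_notMem a ha b hb)

lemma IsProfile.mem_pair_of_star_le (hinv : Involutive star) (hP : IsProfile star S P)
    (hx : x ∈ P) (hc : c ∈ P) (h : star x ≤ c) : c ∈ ({x, star x} : Set α) := by
  by_contra hne
  refine hP.consistent (star x) c hc h (fun heq => hne ?_) (by rwa [hinv])
  have hc' : c ∈ ({star x, star (star x)} : Set α) := heq ▸ Set.mem_insert c _
  rwa [hinv, Set.pair_comm] at hc'

lemma IsProfile.star_mem_of_star_le (hinv : Involutive star) (hP : IsProfile star S P)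
    (hx : x ∈ P) (hc : c ∈ S) (h : star x ≤ c) (hne : c ∉ ({x, star x} : Set α)) :
    star c ∈ P :=
  (hP.mem_or_star_mem hc).resolve_left fun hcP => hne (hP.mem_pair_of_star_le hinv hx hcP h)

lemma IsProfile.mem_of_not_distinguishes (hQ : IsProfile star S Q) (hx : x ∈ S) (hxP : x ∈ P)
    (h : ¬Distinguishes star x P Q) : x ∈ Q :=
  (hQ.mem_or_star_mem hx).resolve_right fun hxQ => h (Or.inl ⟨hxP, hxQ⟩)

lemma IsProfile.exists_distinguishes_of_ne (hP : IsProfile star S P) (hQ : IsProfile star S Q)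
    (hPQ : P ≠ Q) : ∃ s ∈ S, Distinguishes star s P Q := by
  obtain ⟨x, hx⟩ := Set.symmDiff_nonempty.2 hPQ
  rcases Set.mem_symmDiff.1 hx with ⟨hxP, hxQ⟩ | ⟨hxQ, hxP⟩
  · exact ⟨x, hP.subset hxP, Or.inl ⟨hxP, (hQ.mem_or_star_mem (hP.subset hxP)).resolve_left hxQ⟩⟩
  · exact ⟨x, hQ.subset hxQ, Or.inr ⟨hxQ, (hP.mem_or_star_mem (hQ.subset hxQ)).resolve_left hxP⟩⟩

lemma IsProfile.sup_mem_and_star_sup_mem (hinv : Involutive star) (hanti : Antitone star)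
    (hP : IsProfile star S P) (hQ : IsProfile star S Q) (hxP : x ∈ P) (hxQ : star x ∈ Q)
    (hτP : τ ∈ P) (hS : x ⊔ τ ∈ S) (hxτ : ¬Nested star x τ) :
    x ⊔ τ ∈ P ∧ star (x ⊔ τ) ∈ Q := by
  refine ⟨hP.sup_mem hxP hτP hS, hQ.star_mem_of_star_le hinv hxQ hS ?_ ?_⟩
  · rw [hinv]
    exact le_sup_left
  · refine notMem_pair_of_le ?_ le_sup_right
    rwa [nested_star_right hinv, nested_comm hinv hanti]

lemma IsProfile.star_sup_star_mem (hinv : Involutive star) (hR : IsProfile star S R)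
    (hτ : τ ∈ R) (hS : σ ⊔ star τ ∈ S) (hστ : ¬Nested star σ τ) : star (σ ⊔ star τ) ∈ R :=
  hR.star_mem_of_star_le hinv hτ hS le_sup_right (notMem_pair_of_le hστ le_sup_left)

end Profile

section Corners

variable {S P R R' : Set α} {N : Finset α} {s t u v τ σ : α}

lemma sup_star_mem_of_sup_notMem (hinv : Involutive star) (hanti : Antitone star)
    (hSstar : ∀ s ∈ S, star s ∈ S) (hsub : ∀ s ∈ S, ∀ t ∈ S, s ⊔ t ∈ S ∨ s ⊓ t ∈ S)
    (hsS : s ∈ S) (hτS : τ ∈ S) (h₁ : s ⊔ τ ∉ S) (h₂ : star s ⊔ τ ∉ S) :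
    s ⊔ star τ ∈ S ∧ star s ⊔ star τ ∈ S := by
  have hinf : ∀ a ∈ S, a ⊔ τ ∉ S → star a ⊔ star τ ∈ S := fun a ha h =>
    star_inf hinv hanti ▸ hSstar _ ((hsub a ha τ hτS).resolve_left h)
  refine ⟨?_, hinf s hsS h₁⟩
  simpa only [hinv s] using hinf _ (hSstar s hsS) h₂

lemma IsProfile.nested_sup_star (hinv : Involutive star) (hanti : Antitone star)
    (hP : IsProfile star S P) (hτP : τ ∈ P) (hστ : ¬Nested star σ τ) (hvP : v ∈ P)
    (hvτ : Nested star v τ) (hmin : ¬Nested star σ v → v ≤ τ → τ ≤ v) :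
    Nested star v (σ ⊔ star τ) := by
  have of_le : τ ≤ v ∨ τ ≤ star v → Nested star v (σ ⊔ star τ) := by
    rintro (h | h)
    · exact (nested_star_left hinv).1 (nested_of_le ((hanti h).trans le_sup_right))
    · exact nested_of_le (((le_star_comm hinv hanti).1 h).trans le_sup_right)
  rcases (nested_iff hinv hanti).1 hvτ with h | h | h | h
  · by_cases hσv : Nested star σ v
    · exact nested_sup_of_not_nested hinv hanti (by rwa [nested_star_right hinv])
        ((nested_comm hinv hanti).1 hσv) ((nested_star_right hinv).2 hvτ)
    · exact of_le (Or.inl (hmin hσv h))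
  · rcases hP.mem_pair_of_star_le hinv hvP hτP h with rfl | rfl
    · exact of_le (Or.inl le_rfl)
    · exact of_le (Or.inr le_rfl)
  · exact of_le (Or.inl h)
  · exact of_le (Or.inr h)

lemma distinguishes_sup_star (hinv : Involutive star) (hR : IsProfile star S R)
    (hR' : IsProfile star S R') (hsS : s ∈ S) (hst : ¬Nested star s τ)
    (h₁ : s ⊔ star τ ∈ S) (h₂ : star s ⊔ star τ ∈ S) (hτ : τ ∈ R) (hτ' : star τ ∈ R') :
    Distinguishes star (s ⊔ star τ) R R' ∨ Distinguishes star (star s ⊔ star τ) R R' := by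
  rcases hR'.mem_or_star_mem hsS with hs | hs
  · exact Or.inl <| Or.inr ⟨hR'.sup_mem hs hτ' h₁, hR.star_sup_star_mem hinv hτ h₁ hst⟩
  · refine Or.inr <| Or.inr ⟨hR'.sup_mem hs hτ' h₂, hR.star_sup_star_mem hinv hτ h₂ ?_⟩
    rwa [nested_star_left hinv]

lemma crossers_sup_subset [DecidableEq α] (hinv : Involutive star) (hanti : Antitone star)
    (hN : (N : Set α).Pairwise (Nested star)) (htN : t ∈ N) (hτt : τ ∈ ({t, star t} : Set α))
    (hσ : σ ∈ ({s, star s} : Set α)) (hστ : ¬Nested star σ τ) :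
    crossers star (σ ⊔ τ) N ⊆ (crossers star s N).erase t := by
  intro u hu
  rw [mem_crossers] at hu
  rw [Finset.mem_erase, mem_crossers]
  have hut : u ≠ t := by
    rintro rfl
    refine hu.2 ((nested_comm hinv hanti).1 ?_)
    exact (nested_congr hinv hτt (Set.mem_insert _ _)).1 (nested_of_le le_sup_right)
  refine ⟨hut, hu.1, fun hsu => hu.2 ((nested_comm hinv hanti).1 ?_)⟩
  refine nested_sup_of_not_nested hinv hanti hστ ?_ ?_
  · rw [nested_comm hinv hanti, nested_congr hinv hσ (Set.mem_insert _ _)]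
    exact hsu
  · rw [nested_congr hinv (Set.mem_insert _ _) hτt]
    exact hN hu.1 htN hut

lemma exists_minimal_crossingOrientations (hP : IsProfile star S P) (hNS : ↑N ⊆ S)
    (hcr : (crossers star s N).Nonempty) :
    ∃ τ, Minimal (· ∈ crossingOrientations star P s N) τ := by
  set C := crossers star s N
  have hfin : (crossingOrientations star P s N).Finite := by
    refine (C.finite_toSet.union (C.finite_toSet.image star)).subset ?_
    rintro v ⟨-, u, hu, rfl | rfl⟩
    · exact Or.inl hu
    · exact Or.inr ⟨u, hu, rfl⟩
  obtain ⟨u, hu⟩ := hcr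
  obtain ⟨v, hvu, hvP⟩ := hP.exists_mem_pair (hNS (mem_crossers.1 hu).1)
  exact hfin.exists_minimal ⟨v, hvP, u, hu, hvu⟩

lemma IsProfile.nested_sup_star_of_minimal (hinv : Involutive star) (hanti : Antitone star)
    (hP : IsProfile star S P) (hNS : ↑N ⊆ S) (hN : (N : Set α).Pairwise (Nested star))
    (hτ : Minimal (· ∈ crossingOrientations star P s N) τ) (htN : t ∈ N)
    (hτt : τ ∈ ({t, star t} : Set α)) (hst : ¬Nested star s τ) (hσ : σ ∈ ({s, star s} : Set α))
    (hu : u ∈ N) : Nested star u (σ ⊔ star τ) := by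
  obtain ⟨v, hvu, hvP⟩ := hP.exists_mem_pair (hNS hu)
  rw [← nested_congr hinv hvu (Set.mem_insert _ _)]
  have hστ : ¬Nested star σ τ := by rwa [nested_congr hinv hσ (Set.mem_insert τ _)]
  refine hP.nested_sup_star hinv hanti hτ.1.1 hστ hvP ?_ fun hσv hvτ =>
    hτ.2 ⟨hvP, u, mem_crossers.2 ⟨hu, ?_⟩, hvu⟩ hvτ
  · rw [nested_congr hinv hvu hτt]
    exact (eq_or_ne u t).elim (fun h => h ▸ nested_self u) (hN hu htN)
  · rwa [nested_congr hinv hσ hvu] at hσv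

end Corners

section Uncross

variable [DecidableEq α] {S : Set α} {N : Finset α} {s t u τ : α}

def uncross (star : α → α) (N : Finset α) (t s τ : α) : Finset α :=
  insert (s ⊔ star τ) (insert (star s ⊔ star τ) (N.erase t))

lemma mem_uncross :
    u ∈ uncross star N t s τ ↔ u = s ⊔ star τ ∨ u = star s ⊔ star τ ∨ (u ≠ t ∧ u ∈ N) := by
  simp [uncross]

lemma uncross_subset (hNS : ↑N ⊆ S) (h₁ : s ⊔ star τ ∈ S) (h₂ : star s ⊔ star τ ∈ S) :
    ↑(uncross star N t s τ) ⊆ S := by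
  intro u hu
  rcases mem_uncross.1 hu with rfl | rfl | ⟨-, hu⟩
  exacts [h₁, h₂, hNS hu]

lemma crossers_uncross_subset (hinv : Involutive star) :
    crossers star s (uncross star N t s τ) ⊆ (crossers star s N).erase t := by
  intro u hu
  obtain ⟨hu, hsu⟩ := mem_crossers.1 hu
  rcases mem_uncross.1 hu with rfl | rfl | ⟨hut, huN⟩
  · exact absurd (nested_of_le le_sup_left) hsu
  · exact absurd ((nested_star_left hinv).1 (nested_of_le le_sup_left)) hsu
  · exact Finset.mem_erase.2 ⟨hut, mem_crossers.2 ⟨huN, hsu⟩⟩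

lemma pairwise_nested_uncross (hinv : Involutive star) (hanti : Antitone star)
    (hN : (N : Set α).Pairwise (Nested star))
    (hcorner : ∀ σ ∈ ({s, star s} : Set α), ∀ u ∈ N, Nested star u (σ ⊔ star τ)) :
    (uncross star N t s τ : Set α).Pairwise (Nested star) := by
  have hcorner' : ∀ σ ∈ ({s, star s} : Set α), ∀ u ∈ (N.erase t : Set α),
      Nested star u (σ ⊔ star τ) := fun σ hσ u hu => hcorner σ hσ u (Finset.mem_of_mem_erase hu)
  rw [uncross, Finset.coe_insert, Finset.coe_insert]
  refine pairwise_nested_insert hinv hanti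
    (pairwise_nested_insert hinv hanti (hN.mono (Finset.coe_subset.2 (Finset.erase_subset _ _)))
      (hcorner' _ (Set.mem_insert_of_mem _ rfl))) ?_
  rintro u (rfl | hu)
  · exact ⟨star (star s ⊔ star τ), Set.mem_insert_of_mem _ rfl, s ⊔ star τ, Set.mem_insert _ _,
      ((hanti le_sup_left).trans_eq (hinv s)).trans le_sup_left⟩
  · exact hcorner' _ (Set.mem_insert _ _) u hu

lemma distinguishedPairs_subset_uncross (hinv : Involutive star) (hsS : s ∈ S)
    (hst : ¬Nested star s τ) (h₁ : s ⊔ star τ ∈ S) (h₂ : star s ⊔ star τ ∈ S)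
    (hτt : τ ∈ ({t, star t} : Set α)) :
    distinguishedPairs star S N ⊆ distinguishedPairs star S (uncross star N t s τ) := by
  have hcorners : ∀ {R R' : Set α}, IsProfile star S R → IsProfile star S R' → τ ∈ R →
      star τ ∈ R' → ∃ u ∈ uncross star N t s τ, Distinguishes star u R R' :=
    fun hR hR' hτ hτ' => (distinguishes_sup_star hinv hR hR' hsS hst h₁ h₂ hτ hτ').elim
      (⟨_, mem_uncross.2 (Or.inl rfl), ·⟩) (⟨_, mem_uncross.2 (Or.inr (Or.inl rfl)), ·⟩)
  rintro ⟨R, R'⟩ ⟨hR, hR', u, hu, hd⟩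
  refine ⟨hR, hR', ?_⟩
  obtain rfl | hut := eq_or_ne u t
  · rcases (distinguishes_congr hinv hτt).2 hd with ⟨hτ, hτ'⟩ | ⟨hτ, hτ'⟩
    · exact hcorners hR hR' hτ hτ'
    · obtain ⟨c, hc, hd⟩ := hcorners hR' hR hτ hτ'
      exact ⟨c, hc, distinguishes_comm.1 hd⟩
  · exact ⟨u, mem_uncross.2 (Or.inr (Or.inr ⟨hut, hu⟩)), hd⟩

end Uncross

section Main

variable [DecidableEq α] {S P Q : Set α} {N : Finset α} {s : α}

theorem exists_distinguishes_card_crossers_lt (hinv : Involutive star) (hanti : Antitone star)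
    (hSstar : ∀ s ∈ S, star s ∈ S) (hsub : ∀ s ∈ S, ∀ t ∈ S, s ⊔ t ∈ S ∨ s ⊓ t ∈ S)
    (hP : IsProfile star S P) (hQ : IsProfile star S Q) (hsS : s ∈ S)
    (hs : Distinguishes star s P Q) (hNS : ↑N ⊆ S) (hN : (N : Set α).Pairwise (Nested star))
    (hPQ : ¬∃ u ∈ N, Distinguishes star u P Q) (hcr : (crossers star s N).Nonempty) :
    ∃ s' ∈ S, ∃ N' : Finset α, Distinguishes star s' P Q ∧ ↑N' ⊆ S ∧
      (N' : Set α).Pairwise (Nested star) ∧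
      distinguishedPairs star S N ⊆ distinguishedPairs star S N' ∧
      (crossers star s' N').card < (crossers star s N).card := by
  wlog hsPQ : s ∈ P ∧ star s ∈ Q generalizing P Q
  · obtain ⟨s', hs'S, N', hs', hN'⟩ := this hQ hP (distinguishes_comm.1 hs)
      (fun ⟨u, hu, h⟩ => hPQ ⟨u, hu, distinguishes_comm.1 h⟩) (hs.resolve_left hsPQ)
    exact ⟨s', hs'S, N', distinguishes_comm.1 hs', hN'⟩
  obtain ⟨hsP, hsQ⟩ := hsPQ
  obtain ⟨τ, hτ⟩ := exists_minimal_crossingOrientations hP hNS hcr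
  obtain ⟨hτP, t, htc, hτt⟩ := hτ.1
  obtain ⟨htN, hst⟩ := mem_crossers.1 htc
  rw [← nested_congr hinv (Set.mem_insert s _) hτt] at hst
  have hτS : τ ∈ S := hP.subset hτP
  have hτQ : τ ∈ Q := hQ.mem_of_not_distinguishes hτS hτP fun h =>
    hPQ ⟨t, htN, (distinguishes_congr hinv hτt).1 h⟩
  have hlt : ∀ s' N', crossers star s' N' ⊆ (crossers star s N).erase t →
      (crossers star s' N').card < (crossers star s N).card := fun _ _ h =>
    Finset.card_lt_card (h.trans_ssubset (Finset.erase_ssubset htc))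
  by_cases h₁ : s ⊔ τ ∈ S
  · obtain ⟨hP', hQ'⟩ := hP.sup_mem_and_star_sup_mem hinv hanti hQ hsP hsQ hτP h₁ hst
    exact ⟨_, h₁, N, Or.inl ⟨hP', hQ'⟩, hNS, hN, subset_rfl,
      hlt _ _ (crossers_sup_subset hinv hanti hN htN hτt (Set.mem_insert s _) hst)⟩
  by_cases h₂ : star s ⊔ τ ∈ S
  · have hs'τ : ¬Nested star (star s) τ := by rwa [nested_star_left hinv]
    obtain ⟨hQ', hP'⟩ :=
      hQ.sup_mem_and_star_sup_mem hinv hanti hP hsQ (by rwa [hinv]) hτQ h₂ hs'τ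
    exact ⟨_, h₂, N, Or.inr ⟨hQ', hP'⟩, hNS, hN, subset_rfl,
      hlt _ _ (crossers_sup_subset hinv hanti hN htN hτt (Set.mem_insert_of_mem _ rfl) hs'τ)⟩
  obtain ⟨hc₁, hc₂⟩ := sup_star_mem_of_sup_notMem hinv hanti hSstar hsub hsS hτS h₁ h₂
  refine ⟨s, hsS, uncross star N t s τ, Or.inl ⟨hsP, hsQ⟩, uncross_subset hNS hc₁ hc₂, ?_,
    distinguishedPairs_subset_uncross hinv hsS hst hc₁ hc₂ hτt,
    hlt _ _ (crossers_uncross_subset hinv)⟩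
  exact pairwise_nested_uncross hinv hanti hN fun _ hσ _ hu =>
    hP.nested_sup_star_of_minimal hinv hanti hNS hN hτ htN hτt hst hσ hu

theorem exists_nested_distinguishing_insert (hinv : Involutive star) (hanti : Antitone star)
    (hSstar : ∀ s ∈ S, star s ∈ S) (hsub : ∀ s ∈ S, ∀ t ∈ S, s ⊔ t ∈ S ∨ s ⊓ t ∈ S)
    (hP : IsProfile star S P) (hQ : IsProfile star S Q) (hsS : s ∈ S)
    (hs : Distinguishes star s P Q) (hNS : ↑N ⊆ S) (hN : (N : Set α).Pairwise (Nested star)) :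
    ∃ N' : Finset α, ↑N' ⊆ S ∧ (N' : Set α).Pairwise (Nested star) ∧
      distinguishedPairs star S N ⊆ distinguishedPairs star S N' ∧
      (P, Q) ∈ distinguishedPairs star S N' := by
  obtain ⟨n, hn⟩ : ∃ n, (crossers star s N).card = n := ⟨_, rfl⟩
  induction n using Nat.strong_induction_on generalizing s N with
  | _ n ih =>
  by_cases hPQ : ∃ u ∈ N, Distinguishes star u P Q
  · exact ⟨N, hNS, hN, subset_rfl, hP, hQ, hPQ⟩
  obtain hcr | hcr := (crossers star s N).eq_empty_or_nonempty
  · refine ⟨insert s N, ?_, ?_, distinguishedPairs_mono (Finset.subset_insert s N),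
      hP, hQ, s, Finset.mem_insert_self s N, hs⟩
    · rw [Finset.coe_insert]
      exact Set.insert_subset hsS hNS
    · rw [Finset.coe_insert]
      exact pairwise_nested_insert hinv hanti hN fun u hu =>
        (nested_comm hinv hanti).1 (nested_of_crossers_eq_empty hcr hu)
  obtain ⟨s', hs'S, N', hs', hN'S, hN', hsub', hlt⟩ :=
    exists_distinguishes_card_crossers_lt hinv hanti hSstar hsub hP hQ hsS hs hNS hN hPQ hcr
  obtain ⟨N'', hN''S, hN'', hsub'', hPQ''⟩ := ih _ (hn ▸ hlt) hs'S hs' hN'S hN' rfl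
  exact ⟨N'', hN''S, hN'', hsub'.trans hsub'', hPQ''⟩

theorem exists_nested_distinguishing (hinv : Involutive star) (hanti : Antitone star)
    (hSstar : ∀ s ∈ S, star s ∈ S) (hsub : ∀ s ∈ S, ∀ t ∈ S, s ⊔ t ∈ S ∨ s ⊓ t ∈ S)
    (D : Set (Set α × Set α)) (hD : D.Finite) :
    (∀ p ∈ D, IsProfile star S p.1 ∧ IsProfile star S p.2) →
    ∃ N : Finset α, ↑N ⊆ S ∧ (N : Set α).Pairwise (Nested star) ∧
      ∀ p ∈ D, p.1 ≠ p.2 → p ∈ distinguishedPairs star S N := by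
  induction D, hD using Set.Finite.induction_on with
  | empty => exact fun _ => ⟨∅, by simp, by simp, by simp⟩
  | @insert p D _ _ ih =>
    intro hprof
    obtain ⟨N, hNS, hN, hdist⟩ := ih fun q hq => hprof q (Set.mem_insert_of_mem _ hq)
    by_cases hp : p.1 = p.2
    · refine ⟨N, hNS, hN, ?_⟩
      rintro q (rfl | hq) hne
      exacts [absurd hp hne, hdist q hq hne]
    obtain ⟨hP, hQ⟩ := hprof p (Set.mem_insert _ _)
    obtain ⟨s, hsS, hs⟩ := hP.exists_distinguishes_of_ne hQ hp
    obtain ⟨N', hN'S, hN', hsub', hp'⟩ :=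
      exists_nested_distinguishing_insert hinv hanti hSstar hsub hP hQ hsS hs hNS hN
    refine ⟨N', hN'S, hN', ?_⟩
    rintro q (rfl | hq) hne
    exacts [hp', hsub' (hdist q hq hne)]

end Main

end AbstractSeparation

/-- Theorem 3.1: every submodular separation system `S` contains a nested set of
separations distinguishing any given finite set of profiles of `S`. -/
theorem tree_of_tangles_profiles {α : Type*} [Lattice α] (star : α → α)
    (hinv : ∀ x, star (star x) = x) (hanti : ∀ x y : α, x ≤ y → star y ≤ star x)
    (S : Set α) (hSstar : ∀ s ∈ S, star s ∈ S)
    -- `S` is submodular: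
    (hsub : ∀ s ∈ S, ∀ t ∈ S, s ⊔ t ∈ S ∨ s ⊓ t ∈ S)
    (Profs : Set (Set α)) (hfin : Profs.Finite)
    -- each member of `Profs` is a profile of `S`: a consistent orientation of `S`
    -- avoiding all sets `{s, t, star (s ⊔ t)}`:
    (hprof : ∀ P ∈ Profs, P ⊆ S ∧
        (∀ s ∈ S, (s ∈ P ∨ star s ∈ P) ∧ ¬(s ∈ P ∧ star s ∈ P ∧ s ≠ star s)) ∧
        (∀ r s : α, s ∈ P → r ≤ s → ({r, star r} : Set α) ≠ {s, star s} → star r ∉ P) ∧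
        (∀ s ∈ P, ∀ t ∈ P, star (s ⊔ t) ∉ P)) :
    ∃ N ⊆ S,
      -- `N` is nested ...
      (∀ r ∈ N, ∀ s ∈ N,
        ∃ r' ∈ ({r, star r} : Set α), ∃ s' ∈ ({s, star s} : Set α), r' ≤ s') ∧
      -- ... and distinguishes `Profs`:
      ∀ P₁ ∈ Profs, ∀ P₂ ∈ Profs, P₁ ≠ P₂ →
        ∃ s ∈ N, (s ∈ P₁ ∧ star s ∈ P₂) ∨ (s ∈ P₂ ∧ star s ∈ P₁) := by
  classical
  have hprofile : ∀ P ∈ Profs, AbstractSeparation.IsProfile star S P := fun P hP =>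
    ⟨(hprof P hP).1, (hprof P hP).2.1, (hprof P hP).2.2.1, (hprof P hP).2.2.2⟩
  obtain ⟨N, hNS, hN, hdist⟩ :=
    AbstractSeparation.exists_nested_distinguishing hinv hanti hSstar hsub (Profs ×ˢ Profs)
      (hfin.prod hfin) fun p hp => ⟨hprofile _ hp.1, hprofile _ hp.2⟩
  refine ⟨N, hNS, fun r hr s hs => ?_, fun P₁ h₁ P₂ h₂ hne => (hdist (P₁, P₂) ⟨h₁, h₂⟩ hne).2.2⟩
  obtain rfl | hrs := eq_or_ne r s
  exacts [AbstractSeparation.nested_self r, hN hr hs hrs]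
end

section
/- Let U be a distributive universe of separations and S⃗ ⊆ U a submodular separation system without degenerate elements. Then an orientation of S is a T*-tangle if and only if it is an abstract tangle, where T* is the set of stars in T. -/
variable {α : Type*}

/-- A star: a set of non-degenerate oriented separations pointing pairwise towards
each other. -/
def IsStar [Lattice α] (star : α → α) (σ : Set α) : Prop :=
  (∀ s ∈ σ, s ≠ star s) ∧ ∀ s ∈ σ, ∀ t ∈ σ, s ≠ t → s ≤ star t

section Aux

variable [DistribLattice α] (star : α → α)
  (hinv : ∀ x, star (star x) = x) (hanti : ∀ x y : α, x ≤ y → star y ≤ star x)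

include hinv hanti

lemma star_sup' (x y : α) : star (x ⊔ y) = star x ⊓ star y := by
  refine le_antisymm (le_inf (hanti _ _ le_sup_left) (hanti _ _ le_sup_right)) ?_
  have hx : x ≤ star (star x ⊓ star y) := by
    have := hanti _ _ (inf_le_left (a := star x) (b := star y))
    rwa [hinv] at this
  have hy : y ≤ star (star x ⊓ star y) := by
    have := hanti _ _ (inf_le_right (a := star x) (b := star y))
    rwa [hinv] at this
  have := hanti _ _ (sup_le hx hy)
  rwa [hinv] at this

lemma star_inf' (x y : α) : star (x ⊓ y) = star x ⊔ star y := by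
  have := star_sup' star hinv hanti (star x) (star y)
  rw [hinv, hinv] at this
  rw [← this, hinv]

/-- Uncrossing preserves co-smallness of the join of a triple. -/
lemma key_cosmall (a b c : α) (hJ : star (a ⊔ b ⊔ c) ≤ a ⊔ b ⊔ c) :
    star ((a ⊓ star b) ⊔ b ⊔ c) ≤ (a ⊓ star b) ⊔ b ⊔ c := by
  have hs : star ((a ⊓ star b) ⊔ b ⊔ c)
      = ((star a ⊔ b) ⊓ star b) ⊓ star c := by
    rw [star_sup' star hinv hanti, star_sup' star hinv hanti,
      star_inf' star hinv hanti, hinv]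
  have hJ' : (star a ⊓ star b) ⊓ star c ≤ a ⊔ b ⊔ c := by
    rwa [star_sup' star hinv hanti, star_sup' star hinv hanti] at hJ
  rw [hs]
  -- pure distributive lattice computation
  have h1 : ((star a ⊔ b) ⊓ star b) ⊓ star c
      = ((star a ⊓ star b) ⊓ star c) ⊔ ((b ⊓ star b) ⊓ star c) := by
    rw [inf_sup_right, inf_sup_right]
  rw [h1]
  refine sup_le ?_ (le_sup_of_le_left (le_sup_of_le_right (inf_le_of_left_le inf_le_left)))
  have h2 : (star a ⊓ star b) ⊓ star c ≤ (a ⊔ b ⊔ c) ⊓ star b :=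
    le_inf hJ' (inf_le_of_left_le inf_le_right)
  refine h2.trans ?_
  rw [inf_sup_right, inf_sup_right]
  refine sup_le (sup_le ?_ ?_) ?_
  · exact le_sup_of_le_left le_sup_left
  · exact le_sup_of_le_left (le_sup_of_le_right inf_le_left)
  · exact le_sup_of_le_right inf_le_left

end Aux

section Uncross

variable [DistribLattice α] (star : α → α)
    (hinv : ∀ x, star (star x) = x) (hanti : ∀ x y : α, x ≤ y → star y ≤ star x)
    (S : Set α) (hSstar : ∀ s ∈ S, star s ∈ S)
    (hsub : ∀ s ∈ S, ∀ t ∈ S, s ⊔ t ∈ S ∨ s ⊓ t ∈ S)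
    (hdeg : ∀ s ∈ S, s ≠ star s)
    (O : Set α) (hOS : O ⊆ S)
    (horient : ∀ s ∈ S, (s ∈ O ∨ star s ∈ O) ∧ ¬(s ∈ O ∧ star s ∈ O))
    (hcons : ∀ r s : α, s ∈ O → r ≤ s →
        ({r, star r} : Set α) ≠ {s, star s} → star r ∉ O)
    (H : ∀ r ∈ O, ∀ s ∈ O, ∀ t ∈ O, IsStar star ({r, s, t} : Set α) →
        ¬ star (r ⊔ s ⊔ t) ≤ r ⊔ s ⊔ t)

include hinv hanti hSstar hsub hdeg hOS horient hcons H

set_option linter.unusedSectionVars false in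
/-- If an element of `O` were co-small, `{a}` would be a star in `𝒯`, contradiction. -/
lemma not_cosmall_of_mem (a : α) (ha : a ∈ O) (hc : star a ≤ a) : False := by
  refine H a ha a ha a ha ?_ (by simpa using hc)
  constructor
  · intro s hs
    simp only [Set.mem_insert_iff, Set.mem_singleton_iff, or_self] at hs
    exact hs ▸ hdeg a (hOS ha)
  · intro s hs t ht hne
    simp only [Set.mem_insert_iff, Set.mem_singleton_iff, or_self] at hs ht
    exact absurd (hs.trans ht.symm) hne

/-- Uncross a pair: replace `(a, b)` by a pointwise smaller pair in `O` pointing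
towards each other, keeping the join of the triple co-small. -/
lemma uncross (a b c : α) (ha : a ∈ O) (hb : b ∈ O)
    (hJ : star (a ⊔ b ⊔ c) ≤ a ⊔ b ⊔ c) :
    ∃ a' b', a' ∈ O ∧ b' ∈ O ∧ a' ≤ a ∧ b' ≤ b ∧ a' ≤ star b' ∧
      star (a' ⊔ b' ⊔ c) ≤ a' ⊔ b' ⊔ c := by
  have haS : a ∈ S := hOS ha
  have hbS : b ∈ S := hOS hb
  rcases hsub a haS (star b) (hSstar b hbS) with hu | hu
  · -- `a ⊔ star b ∈ S`; set `b' = star (a ⊔ star b) = star a ⊓ b`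
    set b' : α := star a ⊓ b with hb'def
    have hb'eq : b' = star (a ⊔ star b) := by
      rw [star_sup' star hinv hanti, hinv]
    have hb'S : b' ∈ S := hb'eq ▸ hSstar _ hu
    have hb'le : b' ≤ b := inf_le_right
    have hb'O : b' ∈ O := by
      rcases (horient b' hb'S).1 with h | h
      · exact h
      · -- `star b' ∈ O`; derive a contradiction or degenerate case
        by_cases hset : ({b', star b'} : Set α) = ({b, star b} : Set α)
        · have hbmem : b' ∈ ({b, star b} : Set α) := by
            rw [← hset]; exact Set.mem_insert _ _
          rcases hbmem with h1 | h1
          · -- b' = b, then star b' = star b ∈ O, contradicting orientation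
            exact absurd ⟨hb, h1 ▸ h⟩ (horient b hbS).2
          · -- b' = star b : then star b ≤ b, `b` co-small
            simp only [Set.mem_singleton_iff] at h1
            exact absurd (h1 ▸ (inf_le_right : b' ≤ b)) fun hc =>
              not_cosmall_of_mem star hinv hanti S hSstar hsub hdeg O hOS horient hcons H
                b hb hc
        · exact absurd h (hcons b' b hb hb'le hset)
    refine ⟨a, b', ha, hb'O, le_refl a, hb'le, ?_, ?_⟩
    · rw [hb'eq, hinv]; exact le_sup_left
    · have hswap : star (b ⊔ a ⊔ c) ≤ b ⊔ a ⊔ c := by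
        rwa [sup_comm b a]
      have := key_cosmall star hinv hanti b a c hswap
      have heq : (b ⊓ star a) ⊔ a ⊔ c = a ⊔ b' ⊔ c := by
        rw [hb'def, inf_comm b (star a), sup_comm (star a ⊓ b) a]
      rwa [heq] at this
  · -- `a ⊓ star b ∈ S`; set `a' = a ⊓ star b`
    set a' : α := a ⊓ star b with ha'def
    have ha'S : a' ∈ S := hu
    have ha'le : a' ≤ a := inf_le_left
    have ha'O : a' ∈ O := by
      rcases (horient a' ha'S).1 with h | h
      · exact h
      · by_cases hset : ({a', star a'} : Set α) = ({a, star a} : Set α)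
        · have hamem : a' ∈ ({a, star a} : Set α) := by
            rw [← hset]; exact Set.mem_insert _ _
          rcases hamem with h1 | h1
          · exact absurd ⟨ha, h1 ▸ h⟩ (horient a haS).2
          · simp only [Set.mem_singleton_iff] at h1
            exact absurd (h1 ▸ (inf_le_left : a' ≤ a)) fun hc =>
              not_cosmall_of_mem star hinv hanti S hSstar hsub hdeg O hOS horient hcons H
                a ha hc
        · exact absurd h (hcons a' a ha ha'le hset)
    exact ⟨a', b, ha'O, hb, ha'le, le_refl b, inf_le_right,
      key_cosmall star hinv hanti a b c hJ⟩

end Uncross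

/-- Lemma 4.6: in a distributive universe, for a submodular separation system `S`
without degenerate elements, the `𝒯*`-tangles of `S` are exactly its abstract
(`𝒯`-)tangles.  Here `𝒯` is the family of triples with co-small join and `𝒯*` its
subfamily of stars. -/
theorem Tstar_tangles_are_abstract_tangles [DistribLattice α] (star : α → α)
    (hinv : ∀ x, star (star x) = x) (hanti : ∀ x y : α, x ≤ y → star y ≤ star x)
    (S : Set α) (hSstar : ∀ s ∈ S, star s ∈ S)
    (hsub : ∀ s ∈ S, ∀ t ∈ S, s ⊔ t ∈ S ∨ s ⊓ t ∈ S)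
    (hdeg : ∀ s ∈ S, s ≠ star s)
    (O : Set α) (hOS : O ⊆ S)
    (horient : ∀ s ∈ S, (s ∈ O ∨ star s ∈ O) ∧ ¬(s ∈ O ∧ star s ∈ O))
    (hcons : ∀ r s : α, s ∈ O → r ≤ s →
        ({r, star r} : Set α) ≠ {s, star s} → star r ∉ O) :
    -- `O` is a `𝒯*`-tangle iff `O` is an abstract tangle:
    ((∀ r ∈ O, ∀ s ∈ O, ∀ t ∈ O, IsStar star ({r, s, t} : Set α) →
        ¬ star (r ⊔ s ⊔ t) ≤ r ⊔ s ⊔ t) ↔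
      (∀ r ∈ O, ∀ s ∈ O, ∀ t ∈ O, ¬ star (r ⊔ s ⊔ t) ≤ r ⊔ s ⊔ t)) := by
  constructor
  · intro H r hr s hs t ht hJ
    -- uncross (r, s)
    obtain ⟨r₁, s₁, hr₁, hs₁, hr₁r, hs₁s, hrs₁, hJ₁⟩ :=
      uncross star hinv hanti S hSstar hsub hdeg O hOS horient hcons H r s t hr hs hJ
    -- uncross (r₁, t) with third element s₁
    have hJ₁' : star (r₁ ⊔ t ⊔ s₁) ≤ r₁ ⊔ t ⊔ s₁ := by
      have hac : r₁ ⊔ s₁ ⊔ t = r₁ ⊔ t ⊔ s₁ := by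
        rw [sup_assoc, sup_assoc, sup_comm s₁ t]
      rwa [hac] at hJ₁
    obtain ⟨r₂, t₁, hr₂, ht₁, hr₂r₁, ht₁t, hrt₂, hJ₂⟩ :=
      uncross star hinv hanti S hSstar hsub hdeg O hOS horient hcons H r₁ t s₁ hr₁ ht hJ₁'
    -- uncross (s₁, t₁) with third element r₂
    have hJ₂' : star (s₁ ⊔ t₁ ⊔ r₂) ≤ s₁ ⊔ t₁ ⊔ r₂ := by
      have hac : r₂ ⊔ t₁ ⊔ s₁ = s₁ ⊔ t₁ ⊔ r₂ := by
        rw [sup_assoc, sup_comm r₂ (t₁ ⊔ s₁), sup_comm t₁ s₁, sup_assoc]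
      rwa [hac] at hJ₂
    obtain ⟨s₂, t₂, hs₂, ht₂, hs₂s₁, ht₂t₁, hst₂, hJ₃⟩ :=
      uncross star hinv hanti S hSstar hsub hdeg O hOS horient hcons H s₁ t₁ r₂ hs₁ ht₁ hJ₂'
    -- the final triple `{r₂, s₂, t₂}` is a star with co-small join: contradiction
    have hle : ∀ x y : α, x ≤ star y → y ≤ star x := fun x y h => by
      have := hanti _ _ h; rwa [hinv] at this
    have h12 : r₂ ≤ star s₂ :=
      (hr₂r₁.trans hrs₁).trans (hanti _ _ hs₂s₁)
    have h13 : r₂ ≤ star t₂ := hrt₂.trans (hanti _ _ ht₂t₁)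
    have h23 : s₂ ≤ star t₂ := hst₂
    refine H r₂ hr₂ s₂ hs₂ t₂ ht₂ ⟨?_, ?_⟩ ?_
    · intro x hx
      rcases hx with h | h | h
      · exact h ▸ hdeg r₂ (hOS hr₂)
      · exact h ▸ hdeg s₂ (hOS hs₂)
      · simp only [Set.mem_singleton_iff] at h
        exact h ▸ hdeg t₂ (hOS ht₂)
    · intro x hx y hy hxy
      simp only [Set.mem_insert_iff, Set.mem_singleton_iff] at hx hy
      rcases hx with hx | hx | hx <;> rcases hy with hy | hy | hy <;>
        subst hx <;> subst hy
      · exact absurd rfl hxy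
      · exact h12
      · exact h13
      · exact hle _ _ h12
      · exact absurd rfl hxy
      · exact h23
      · exact hle _ _ h13
      · exact hle _ _ h23
      · exact absurd rfl hxy
    · have hac : s₂ ⊔ t₂ ⊔ r₂ = r₂ ⊔ s₂ ⊔ t₂ := by
        rw [sup_comm (s₂ ⊔ t₂) r₂, sup_assoc]
      rwa [hac] at hJ₃
  · intro H r hr s hs t ht _
    exact H r hr s hs t ht
end

section
/- Let G be a finite graph that is not a clique, and let S⃗ be the set of separations (A,B) of G (A ∪ B = V(G), no edge between A\B and B\A) whose separator A ∩ B induces a clique. For any two such clique separations s, t, at least three of the four corner separations s⃗ ∨ t⃗, s⃗ ∨ t⃗*, s⃗* ∨ t⃗, s⃗* ∨ t⃗* (taken as unoriented separations) again have clique separators; in particular, S⃗ is a submodular separation system. -/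
/-- `(A, B)` is a separation of `G`: `A ∪ B = V` and no edge between `A \ B` and
`B \ A`. -/
def IsSep {V : Type*} (G : SimpleGraph V) (A B : Set V) : Prop :=
  A ∪ B = Set.univ ∧ ∀ a ∈ A \ B, ∀ b ∈ B \ A, ¬ G.Adj a b

/-- `(A, B)` is a clique separation of `G`: a separation whose separator `A ∩ B`
induces a clique. -/
def IsCliqueSep {V : Type*} (G : SimpleGraph V) (A B : Set V) : Prop :=
  IsSep G A B ∧ G.IsClique (A ∩ B)

lemma sep_symm {V : Type*} {G : SimpleGraph V} {A B : Set V} (h : IsSep G A B) :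
    IsSep G B A :=
  ⟨by rw [Set.union_comm]; exact h.1, fun b hb a ha hadj => h.2 a ha b hb hadj.symm⟩

lemma sep_join {V : Type*} {G : SimpleGraph V} {A B C D : Set V}
    (h1 : IsSep G A B) (h2 : IsSep G C D) : IsSep G (A ∪ C) (B ∩ D) := by
  have u1 : ∀ v : V, v ∈ A ∨ v ∈ B := fun v => by
    have := h1.1 ▸ Set.mem_univ v; rwa [Set.mem_union] at this
  have u2 : ∀ v : V, v ∈ C ∨ v ∈ D := fun v => by
    have := h2.1 ▸ Set.mem_univ v; rwa [Set.mem_union] at this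
  constructor
  · ext v
    simp only [Set.mem_union, Set.mem_inter_iff, Set.mem_univ, iff_true]
    rcases u1 v with h | h
    · left; left; exact h
    · rcases u2 v with h' | h'
      · left; right; exact h'
      · right; exact ⟨h, h'⟩
  · rintro a ⟨haU, haN⟩ b ⟨⟨hbB, hbD⟩, hbN⟩
    simp only [Set.mem_union, not_or] at hbN
    by_cases haB : a ∈ B
    · have haD : a ∉ D := fun hD => haN ⟨haB, hD⟩
      have haC : a ∈ C := (u2 a).resolve_right haD
      exact h2.2 a ⟨haC, haD⟩ b ⟨hbD, hbN.2⟩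
    · have haA : a ∈ A := (u1 a).resolve_right haB
      exact h1.2 a ⟨haA, haB⟩ b ⟨hbB, hbN.1⟩

/-- Extract a "bad pair" witness from a non-clique corner. -/
lemma corner_witness {V : Type*} {G : SimpleGraph V} {A B C D : Set V}
    (hAB : G.IsClique (A ∩ B)) (hCD : G.IsClique (C ∩ D))
    (h : ¬ G.IsClique ((A ∪ C) ∩ (B ∩ D))) :
    ∃ x y, x ∈ A ∩ B ∧ x ∈ D ∧ x ∉ C ∧ y ∈ C ∩ D ∧ y ∈ B ∧ y ∉ A ∧ ¬ G.Adj x y := by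
  rw [SimpleGraph.isClique_iff, Set.Pairwise] at h
  push_neg at h
  obtain ⟨u, hu, v, hv, hne, hnadj⟩ := h
  obtain ⟨huAC, huB, huD⟩ : (u ∈ A ∨ u ∈ C) ∧ u ∈ B ∧ u ∈ D := by
    simpa [Set.mem_inter_iff, Set.mem_union] using hu
  obtain ⟨hvAC, hvB, hvD⟩ : (v ∈ A ∨ v ∈ C) ∧ v ∈ B ∧ v ∈ D := by
    simpa [Set.mem_inter_iff, Set.mem_union] using hv
  rcases huAC with huA | huC <;> rcases hvAC with hvA | hvC
  · exact absurd (hAB ⟨huA, huB⟩ ⟨hvA, hvB⟩ hne) hnadj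
  · have huC : u ∉ C := fun hC => hnadj (hCD ⟨hC, huD⟩ ⟨hvC, hvD⟩ hne)
    have hvA : v ∉ A := fun hA => hnadj (hAB ⟨huA, huB⟩ ⟨hA, hvB⟩ hne)
    exact ⟨u, v, ⟨huA, huB⟩, huD, huC, ⟨hvC, hvD⟩, hvB, hvA, hnadj⟩
  · have hvC : v ∉ C := fun hC => hnadj (hCD ⟨huC, huD⟩ ⟨hC, hvD⟩ hne)
    have huA : u ∉ A := fun hA => hnadj (hAB ⟨hA, huB⟩ ⟨hvA, hvB⟩ hne)
    exact ⟨v, u, ⟨hvA, hvB⟩, hvD, hvC, ⟨huC, huD⟩, huB, huA,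
      fun hadj => hnadj hadj.symm⟩
  · exact absurd (hCD ⟨huC, huD⟩ ⟨hvC, hvD⟩ hne) hnadj

/-- Two witnesses on opposite strict sides of `(C,D)` give a contradiction. -/
lemma xside_contra {V : Type*} {G : SimpleGraph V} {A B C D : Set V}
    (hAB : G.IsClique (A ∩ B)) (hCD : IsSep G C D)
    {x x' : V} (hx : x ∈ A ∩ B) (hxD : x ∈ D) (hxC : x ∉ C)
    (hx' : x' ∈ A ∩ B) (hx'C : x' ∈ C) (hx'D : x' ∉ D) : False := by
  have hne : x ≠ x' := fun h => hxC (h ▸ hx'C)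
  exact hCD.2 x' ⟨hx'C, hx'D⟩ x ⟨hxD, hxC⟩ (hAB hx hx' hne).symm

/-- Lemma 5.3: for two clique separations `(A,B)` and `(C,D)` of a finite graph that is
not a clique, at least three of the four corners have clique separators; in particular
the clique separations form a submodular separation system (the join `(A ∪ C, B ∩ D)` or
the meet `(A ∩ C, B ∪ D)` is again a clique separation). -/
theorem clique_separations_submodular {V : Type*} [Fintype V] (G : SimpleGraph V)
    (hG : ¬ G.IsClique (Set.univ : Set V))
    (A B C D : Set V) (hAB : IsCliqueSep G A B) (hCD : IsCliqueSep G C D) :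
    ((G.IsClique ((A ∪ C) ∩ (B ∩ D)) ∧ G.IsClique ((A ∪ D) ∩ (B ∩ C)) ∧
        G.IsClique ((B ∪ C) ∩ (A ∩ D))) ∨
     (G.IsClique ((A ∪ C) ∩ (B ∩ D)) ∧ G.IsClique ((A ∪ D) ∩ (B ∩ C)) ∧
        G.IsClique ((B ∪ D) ∩ (A ∩ C))) ∨
     (G.IsClique ((A ∪ C) ∩ (B ∩ D)) ∧ G.IsClique ((B ∪ C) ∩ (A ∩ D)) ∧
        G.IsClique ((B ∪ D) ∩ (A ∩ C))) ∨
     (G.IsClique ((A ∪ D) ∩ (B ∩ C)) ∧ G.IsClique ((B ∪ C) ∩ (A ∩ D)) ∧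
        G.IsClique ((B ∪ D) ∩ (A ∩ C)))) ∧
    (IsCliqueSep G (A ∪ C) (B ∩ D) ∨ IsCliqueSep G (A ∩ C) (B ∪ D)) := by
  obtain ⟨sAB, kAB⟩ := hAB
  obtain ⟨sCD, kCD⟩ := hCD
  have kBA : G.IsClique (B ∩ A) := by rwa [Set.inter_comm]
  have kDC : G.IsClique (D ∩ C) := by rwa [Set.inter_comm]
  have sBA := sep_symm sAB
  have sDC := sep_symm sCD
  -- witnesses for non-clique corners, with strict sides
  -- corner1 : (A ∪ C) ∩ (B ∩ D), bad pair x ∈ D \ C (x ∈ A∩B), y ∈ B \ A (y ∈ C∩D)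
  -- corner2 : (A ∪ D) ∩ (B ∩ C), x ∈ C \ D, y ∈ B \ A
  -- corner3 : (B ∪ C) ∩ (A ∩ D), x ∈ D \ C, y ∈ A \ B
  -- corner4 : (B ∪ D) ∩ (A ∩ C), x ∈ C \ D, y ∈ A \ B
  have w1 := fun h => corner_witness kAB kCD h
  have w2 := fun h => corner_witness kAB kDC h
  have w3 := fun h => corner_witness kBA kCD h
  have w4 := fun h => corner_witness kBA kDC h
  -- any two distinct non-clique corners give a contradiction
  have h12 : ¬ G.IsClique ((A ∪ C) ∩ (B ∩ D)) → ¬ G.IsClique ((A ∪ D) ∩ (B ∩ C)) → False := by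
    intro h1 h2
    obtain ⟨x, y, hx, hxD, hxC, -, -, -, -⟩ := w1 h1
    obtain ⟨x', y', hx', hx'C, hx'D, -, -, -, -⟩ := w2 h2
    exact xside_contra kAB sCD hx hxD hxC hx' hx'C hx'D
  have h13 : ¬ G.IsClique ((A ∪ C) ∩ (B ∩ D)) → ¬ G.IsClique ((B ∪ C) ∩ (A ∩ D)) → False := by
    intro h1 h3
    obtain ⟨x, y, -, -, -, hy, hyB, hyA, -⟩ := w1 h1
    obtain ⟨x', y', -, -, -, hy', hy'A, hy'B, -⟩ := w3 h3
    exact xside_contra kCD sAB hy hyB hyA hy' hy'A hy'B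
  have h14 : ¬ G.IsClique ((A ∪ C) ∩ (B ∩ D)) → ¬ G.IsClique ((B ∪ D) ∩ (A ∩ C)) → False := by
    intro h1 h4
    obtain ⟨x, y, hx, hxD, hxC, -, -, -, -⟩ := w1 h1
    obtain ⟨x', y', hx', hx'C, hx'D, -, -, -, -⟩ := w4 h4
    exact xside_contra kAB sCD hx hxD hxC (by rwa [Set.inter_comm] at hx') hx'C hx'D
  have h23 : ¬ G.IsClique ((A ∪ D) ∩ (B ∩ C)) → ¬ G.IsClique ((B ∪ C) ∩ (A ∩ D)) → False := by
    intro h2 h3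
    obtain ⟨x, y, hx, hxC, hxD, -, -, -, -⟩ := w2 h2
    obtain ⟨x', y', hx', hx'D, hx'C, -, -, -, -⟩ := w3 h3
    exact xside_contra kAB sDC hx hxC hxD (by rwa [Set.inter_comm] at hx') hx'D hx'C
  have h24 : ¬ G.IsClique ((A ∪ D) ∩ (B ∩ C)) → ¬ G.IsClique ((B ∪ D) ∩ (A ∩ C)) → False := by
    intro h2 h4
    obtain ⟨x, y, -, -, -, hy, hyB, hyA, -⟩ := w2 h2
    obtain ⟨x', y', -, -, -, hy', hy'A, hy'B, -⟩ := w4 h4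
    exact xside_contra kDC sAB hy hyB hyA hy' hy'A hy'B
  have h34 : ¬ G.IsClique ((B ∪ C) ∩ (A ∩ D)) → ¬ G.IsClique ((B ∪ D) ∩ (A ∩ C)) → False := by
    intro h3 h4
    obtain ⟨x, y, hx, hxD, hxC, -, -, -, -⟩ := w3 h3
    obtain ⟨x', y', hx', hx'C, hx'D, -, -, -, -⟩ := w4 h4
    exact xside_contra kBA sCD hx hxD hxC hx' hx'C hx'D
  constructor
  · by_cases c1 : G.IsClique ((A ∪ C) ∩ (B ∩ D))
    · by_cases c2 : G.IsClique ((A ∪ D) ∩ (B ∩ C))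
      · by_cases c3 : G.IsClique ((B ∪ C) ∩ (A ∩ D))
        · exact Or.inl ⟨c1, c2, c3⟩
        · have c4 : G.IsClique ((B ∪ D) ∩ (A ∩ C)) := by
            by_contra c4; exact h34 c3 c4
          exact Or.inr (Or.inl ⟨c1, c2, c4⟩)
      · have c3 : G.IsClique ((B ∪ C) ∩ (A ∩ D)) := by
          by_contra c3; exact h23 c2 c3
        have c4 : G.IsClique ((B ∪ D) ∩ (A ∩ C)) := by
          by_contra c4; exact h24 c2 c4
        exact Or.inr (Or.inr (Or.inl ⟨c1, c3, c4⟩))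
    · have c2 : G.IsClique ((A ∪ D) ∩ (B ∩ C)) := by
        by_contra c2; exact h12 c1 c2
      have c3 : G.IsClique ((B ∪ C) ∩ (A ∩ D)) := by
        by_contra c3; exact h13 c1 c3
      have c4 : G.IsClique ((B ∪ D) ∩ (A ∩ C)) := by
        by_contra c4; exact h14 c1 c4
      exact Or.inr (Or.inr (Or.inr ⟨c2, c3, c4⟩))
  · by_cases c1 : G.IsClique ((A ∪ C) ∩ (B ∩ D))
    · exact Or.inl ⟨sep_join sAB sCD, c1⟩
    · have c4 : G.IsClique ((B ∪ D) ∩ (A ∩ C)) := by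
        by_contra h4; exact h14 c1 h4
      exact Or.inr ⟨sep_symm (sep_join sBA sDC), by rwa [Set.inter_comm]⟩
end

section
/- Let G be a finite graph. G has a tree-decomposition in which every part induces a clique if and only if G is chordal. -/
/-!
A tree-decomposition into cliques forces chordality by the Helly property of subtrees: the
subtrees of parts containing the vertices of an induced cycle would meet exactly along the cycle,
while three subtrees meeting pairwise share a part.

Conversely, a finite chordal graph has a simplicial vertex (Dirac), hence a perfect elimination
ordering. Joining every vertex to its lowest later neighbour gives a tree, and the parts
`{v} ∪ (later neighbours of v)` are cliques forming a tree-decomposition.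
-/

/-- A graph is chordal if it has no induced cycle of length at least 4, i.e. no graph
embedding (which is automatically induced) of a cycle graph of length `≥ 4`. -/
def IsChordal {V : Type*} (G : SimpleGraph V) : Prop :=
  ∀ n : ℕ, 4 ≤ n → IsEmpty (SimpleGraph.cycleGraph n ↪g G)

/-- A tree-decomposition of `G` with parts `bags : ι → Set V` over a tree `T`. -/
def IsTreeDecomposition {V ι : Type*} (G : SimpleGraph V) (T : SimpleGraph ι)
    (bags : ι → Set V) : Prop :=
  T.IsTree ∧
  (∀ v : V, ∃ i, v ∈ bags i) ∧
  (∀ u v : V, G.Adj u v → ∃ i, u ∈ bags i ∧ v ∈ bags i) ∧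
  (∀ v : V, (T.induce {i | v ∈ bags i}).Connected)

open SimpleGraph

namespace SimpleGraph

section

variable {V : Type*} {G : SimpleGraph V}

theorem cycleGraph_adj_add_one {n : ℕ} [NeZero n] (hn : 2 ≤ n) (u : Fin n) :
    (cycleGraph n).Adj u (u + 1) := by
  obtain ⟨m, rfl⟩ := Nat.exists_eq_add_of_le' hn
  exact cycleGraph_adj.2 (Or.inr (add_sub_cancel_left u 1))

theorem cycleGraph_adj_iff_val {n : ℕ} (hn : 2 ≤ n) {u v : Fin n} :
    (cycleGraph n).Adj u v ↔ u.val + 1 = v.val ∨ v.val + 1 = u.val ∨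
      (u.val = 0 ∧ v.val + 1 = n) ∨ (v.val = 0 ∧ u.val + 1 = n) := by
  rw [cycleGraph_adj']
  have hu := u.isLt
  have hv := v.isLt
  rcases lt_trichotomy u v with h | rfl | h
  · rw [Fin.coe_sub_iff_lt.2 h, Fin.sub_val_of_le h.le]
    have : u.val < v.val := h
    omega
  · rw [Fin.sub_val_of_le le_rfl]
    omega
  · rw [Fin.coe_sub_iff_lt.2 h, Fin.sub_val_of_le h.le]
    have : v.val < u.val := h
    omega

namespace Walk

variable {u v : V}

theorem IsChordless.map {W : Type*} {H : SimpleGraph W} (f : G ↪g H) {p : G.Walk u v}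
    (hp : p.IsChordless) : (p.map f.toHom).IsChordless := by
  rw [isChordless_iff_forall_mem_edges] at hp ⊢
  intro a b ha hb hab
  rw [support_map, List.mem_map] at ha hb
  obtain ⟨a, ha, rfl⟩ := ha
  obtain ⟨b, hb, rfl⟩ := hb
  rw [edges_map]
  exact List.mem_map_of_mem (hp ha hb (f.map_adj_iff.1 hab))

theorem isChordless_of_length_eq_dist (p : G.Walk u v) (hp : p.length = G.dist u v) :
    p.IsChordless := by
  rw [isChordless_iff_forall_mem_edges]
  intro a b ha hb hab
  obtain ⟨i, rfl, hi⟩ := mem_support_iff_exists_getVert.1 ha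
  obtain ⟨j, rfl, hj⟩ := mem_support_iff_exists_getVert.1 hb
  clear ha hb
  wlog hij : i < j generalizing i j
  · rcases (not_lt.1 hij).lt_or_eq with hji | rfl
    · rw [Sym2.eq_swap]
      exact this j hj i hi hab.symm hji
    · exact absurd hab (G.loopless.irrefl _)
  obtain rfl : j = i + 1 := by
    by_contra hne
    have := G.dist_le ((p.take i).append (cons hab (p.drop j)))
    simp only [length_append, take_length, length_cons, drop_length] at this
    omega
  exact (mk_mem_edges_iff_exists p).2 ⟨i, by omega, rfl⟩

theorem mem_of_mem_support_map_induce {s : Set V} {u' v' : s}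
    (p : (G.induce s).Walk u' v') {w : V} (hw : w ∈ (p.map (Embedding.induce s).toHom).support) :
    w ∈ s := by
  rw [Walk.support_map, List.mem_map] at hw
  obtain ⟨w, -, rfl⟩ := hw
  exact w.2

end Walk

end

section Tree

variable {ι : Type*} {T : SimpleGraph ι}

theorem induce_biUnion_le_connected (s : ℕ → Set ι) (hs : ∀ k, (T.induce (s k)).Connected)
    (hchain : ∀ k, (s k ∩ s (k + 1)).Nonempty) (m : ℕ) :
    (T.induce (⋃ k ≤ m, s k)).Connected := by
  induction m with
  | zero =>
    rw [show (⋃ k ≤ 0, s k) = s 0 by ext; simp]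
    exact hs 0
  | succ m ih =>
    rw [Set.biUnion_le_succ]
    obtain ⟨x, hx, hx'⟩ := hchain m
    exact induce_union_connected ih.preconnected (hs _).preconnected
      ⟨x, Set.mem_biUnion (le_refl m) hx, hx'⟩

theorem mem_of_induce_preconnected_of_not_reachable_deleteEdges {X : Set ι}
    (hX : (T.induce X).Preconnected) {x y z₁ z₂ : ι} (h₁ : z₁ ∈ X) (h₂ : z₂ ∈ X)
    (h : ¬(T.deleteEdges {s(x, y)}).Reachable z₁ z₂) : x ∈ X ∧ y ∈ X := by
  obtain ⟨q⟩ := hX ⟨z₁, h₁⟩ ⟨z₂, h₂⟩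
  set Q := q.map (Embedding.induce X).toHom
  have hQ : s(x, y) ∈ Q.edges := by
    by_contra hQ
    exact h (reachable_deleteEdges_iff_exists_walk.2 ⟨Q, hQ⟩)
  exact ⟨q.mem_of_mem_support_map_induce (Q.fst_mem_support_of_mem_edges hQ),
    q.mem_of_mem_support_map_induce (Q.snd_mem_support_of_mem_edges hQ)⟩

theorem Walk.IsPath.exists_adj_mem_notMem_reachable_deleteEdges {A : Set ι} {a b : ι}
    {p : T.Walk a b} (hp : p.IsPath) (ha : a ∈ A) (hb : b ∉ A) :
    ∃ x y, T.Adj x y ∧ x ∈ A ∧ y ∉ A ∧ (T.deleteEdges {s(x, y)}).Reachable y b := by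
  induction p with
  | nil => exact absurd ha hb
  | @cons a z b haz q ih =>
    rw [cons_isPath_iff] at hp
    by_cases hz : z ∈ A
    · exact ih hp.1 hz hb
    · exact ⟨a, z, haz, ha, hz, reachable_deleteEdges_iff_exists_walk.2
        ⟨q, fun h => hp.2 (q.fst_mem_support_of_mem_edges h)⟩⟩

/-- The Helly property of subtrees. Cut the tree at the edge `xy` where a path from
`a ∈ A ∩ B` to `b ∈ B ∩ C` leaves `A`: then `A` lies on the side of `x` and `b` on the side of
`y`, so the connected sets `B` and `C`, which meet both sides, contain `x`. -/
theorem IsAcyclic.inter_inter_nonempty (hT : T.IsAcyclic) {A B C : Set ι}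
    (hA : (T.induce A).Preconnected) (hB : (T.induce B).Preconnected)
    (hC : (T.induce C).Preconnected) (hAB : (A ∩ B).Nonempty) (hBC : (B ∩ C).Nonempty)
    (hCA : (C ∩ A).Nonempty) : (A ∩ B ∩ C).Nonempty := by
  classical
  obtain ⟨a, haA, haB⟩ := hAB
  obtain ⟨b, hbB, hbC⟩ := hBC
  obtain ⟨c, hcC, hcA⟩ := hCA
  by_cases hbA : b ∈ A
  · exact ⟨b, ⟨hbA, hbB⟩, hbC⟩
  obtain ⟨p⟩ := (hB ⟨a, haB⟩ ⟨b, hbB⟩).map (Embedding.induce B).toHom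
  obtain ⟨x, y, hxy, hxA, hyA, hyb⟩ :=
    p.bypass_isPath.exists_adj_mem_notMem_reachable_deleteEdges haA hbA
  have hbridge := isBridge_iff.1 (isAcyclic_iff_forall_adj_isBridge.1 hT hxy)
  have hAx : ∀ z ∈ A, (T.deleteEdges {s(x, y)}).Reachable x z := fun z hz => by
    by_contra h
    exact hyA (mem_of_induce_preconnected_of_not_reachable_deleteEdges hA hxA hz h).2
  have hmem : ∀ {X : Set ι}, (T.induce X).Preconnected → ∀ z ∈ X ∩ A, b ∈ X → x ∈ X :=
    fun hX z hz hbX => (mem_of_induce_preconnected_of_not_reachable_deleteEdges hX hz.1 hbX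
      fun h => hbridge (((hAx z hz.2).trans h).trans hyb.symm)).1
  exact ⟨x, ⟨hxA, hmem hB a ⟨haB, haA⟩ hbB⟩, hmem hC c ⟨hcC, hcA⟩ hbC⟩

theorem connected_of_forall_exists_adj_lt (t : ι) (μ : ι → ℕ)
    (h : ∀ x ≠ t, ∃ y, T.Adj x y ∧ μ y < μ x) : T.Connected := by
  have hreach : ∀ x, T.Reachable x t := by
    intro x
    induction hx : μ x using Nat.strong_induction_on generalizing x with
    | _ m ih =>
    by_cases hxt : x = t
    · exact hxt ▸ Reachable.refl x
    · obtain ⟨y, hxy, hμ⟩ := h x hxt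
      exact hxy.reachable.trans (ih _ (hx ▸ hμ) y rfl)
  exact (connected_iff T).2 ⟨fun x y => (hreach x).trans (hreach y).symm, ⟨t⟩⟩

/-- On a cycle, the vertex of largest potential would have both of its cycle neighbours as its
parent. -/
theorem isTree_fromRel_parent (root : ι) (parent : ι → ι) (μ : ι → ℕ)
    (hroot : parent root = root) (hμ : ∀ x ≠ root, μ (parent x) < μ x) :
    (fromRel fun x y => parent x = y).IsTree := by
  have hparent : ∀ x, x ≠ root → (fromRel fun x y => parent x = y).Adj x (parent x) := fun x hx =>
    fromRel_adj _ _ _ |>.2 ⟨fun h => (hμ x hx).ne (congrArg μ h.symm), Or.inl rfl⟩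
  refine ⟨connected_of_forall_exists_adj_lt root μ fun x hx => ⟨_, hparent x hx, hμ x hx⟩, ?_⟩
  intro u c hc
  classical
  obtain ⟨m, hm, hmax⟩ := c.support.toFinset.exists_max_image μ ⟨u, by simp⟩
  rw [List.mem_toFinset] at hm
  have hup : ∀ w ∈ c.support, (fromRel fun x y => parent x = y).Adj m w → parent m = w := by
    intro w hw hmw
    obtain ⟨hne, h | h⟩ := (fromRel_adj _ _ _).1 hmw
    · exact h
    · by_cases hwr : w = root
      · exact absurd (h ▸ hwr ▸ hroot) hne
      · have := hmax w (List.mem_toFinset.2 hw)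
        have := hμ w hwr
        rw [h] at this
        omega
  have hc' : (c.rotate m hm).IsCycle := hc.rotate hm
  have hnil := hc'.not_nil
  have hmem : ∀ i, (c.rotate m hm).getVert i ∈ c.support := fun i =>
    (c.mem_support_rotate_iff m hm).1 (Walk.getVert_mem_support _ _)
  exact hc'.snd_ne_penultimate <| (hup _ (hmem 1) (Walk.adj_snd hnil)).symm.trans
    (hup _ (hmem _) (Walk.adj_penultimate hnil).symm)

end Tree

end SimpleGraph

open Fin.NatCast in
/-- For an induced cycle `f` of length `n ≥ 4`, the subtrees `S k` of parts containing `f k`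
meet exactly for neighbouring `k`; Helly applied to `S 0`, `S 1` and the connected union of
`S 2, …, S (n-1)` yields a part containing `f 0`, `f 1` and some `f k` with `2 ≤ k < n`, which
cannot be adjacent to both. -/
theorem IsTreeDecomposition.isChordal {V ι : Type*} {G : SimpleGraph V} {T : SimpleGraph ι}
    {bags : ι → Set V} (hdec : IsTreeDecomposition G T bags) (hclique : ∀ i, G.IsClique (bags i)) :
    IsChordal G := by
  intro n hn
  refine ⟨fun f => ?_⟩
  obtain ⟨hT, -, hedge, hconn⟩ := hdec
  have : NeZero n := ⟨by omega⟩
  set S : ℕ → Set ι := fun k => {i | f k ∈ bags i}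
  have hmeet : ∀ k, (S k ∩ S (k + 1)).Nonempty := fun k => by
    have hadj := cycleGraph_adj_add_one (by omega) (k : Fin n)
    rw [← Nat.cast_succ] at hadj
    exact hedge _ _ (f.map_adj_iff.2 hadj)
  have hnear : ∀ i j, i < n → j < n → (S i ∩ S j).Nonempty →
      i = j ∨ i + 1 = j ∨ j + 1 = i ∨ (i = 0 ∧ j + 1 = n) ∨ (j = 0 ∧ i + 1 = n) := by
    rintro i j hi hj ⟨t, hit, hjt⟩
    by_cases hij : f i = f j
    · have := f.injective hij
      rw [Fin.ext_iff, Fin.val_cast_of_lt hi, Fin.val_cast_of_lt hj] at this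
      exact Or.inl this
    · have := f.map_adj_iff.1 (hclique t hit hjt hij)
      rw [cycleGraph_adj_iff_val (by omega), Fin.val_cast_of_lt hi, Fin.val_cast_of_lt hj] at this
      exact Or.inr this
  set U := ⋃ k ≤ n - 3, S (k + 2)
  have hU : (T.induce U).Connected :=
    induce_biUnion_le_connected _ (fun k => hconn _) (fun k => hmeet (k + 2)) _
  have h1U : (S 1 ∩ U).Nonempty := by
    obtain ⟨t, ht⟩ := hmeet 1
    exact ⟨t, ht.1, Set.mem_biUnion (Nat.zero_le _) ht.2⟩
  have hU0 : (U ∩ S 0).Nonempty := by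
    obtain ⟨t, ht⟩ := hmeet (n - 1)
    rw [show n - 1 + 1 = n by omega] at ht
    refine ⟨t, Set.mem_biUnion (le_refl (n - 3)) ?_, ?_⟩
    · rw [show n - 3 + 2 = n - 1 by omega]
      exact ht.1
    · simpa [S] using ht.2
  obtain ⟨t, ⟨ht0, ht1⟩, htU⟩ := hT.isAcyclic.inter_inter_nonempty (hconn _).preconnected
    (hconn _).preconnected hU.preconnected (hmeet 0) h1U hU0
  obtain ⟨k, hk, htk⟩ := Set.mem_iUnion₂.1 htU
  have h0 := hnear 0 (k + 2) (by omega) (by omega) ⟨t, ht0, htk⟩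
  have h1 := hnear 1 (k + 2) (by omega) (by omega) ⟨t, ht1, htk⟩
  omega

namespace SimpleGraph

variable {V : Type*} {G : SimpleGraph V}

def IsSimplicial (G : SimpleGraph V) (v : V) : Prop :=
  G.IsClique (G.neighborSet v)

theorem IsSimplicial.of_induce {s : Set V} {v : s} (hv : (G.induce s).IsSimplicial v)
    (hs : G.neighborSet v ⊆ s) : G.IsSimplicial v :=
  fun x hx y hy hxy => hv (show (⟨x, hs hx⟩ : s) ∈ _ from hx) (show (⟨y, hs hy⟩ : s) ∈ _ from hy)
    fun h => hxy (congrArg Subtype.val h)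

/-- The vertex set of the component of `G - N` containing `b` (empty if `b ∈ N`). -/
def componentAvoiding (G : SimpleGraph V) (N : Set V) (b : V) : Set V :=
  {v | ∃ p : G.Walk b v, ∀ w ∈ p.support, w ∉ N}

section ComponentAvoiding

variable {N : Set V} {b v w : V}

theorem mem_componentAvoiding_self (hb : b ∉ N) : b ∈ G.componentAvoiding N b :=
  ⟨Walk.nil, by simpa using hb⟩

theorem notMem_of_mem_componentAvoiding (hv : v ∈ G.componentAvoiding N b) : v ∉ N :=
  let ⟨p, hp⟩ := hv
  hp v p.end_mem_support

theorem mem_componentAvoiding_of_adj (hv : v ∈ G.componentAvoiding N b) (hvw : G.Adj v w)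
    (hw : w ∉ N) : w ∈ G.componentAvoiding N b := by
  obtain ⟨p, hp⟩ := hv
  refine ⟨p.concat hvw, fun u hu => ?_⟩
  rw [Walk.support_concat, List.mem_append, List.mem_singleton] at hu
  exact hu.elim (hp u) fun h => h ▸ hw

theorem preconnected_induce_componentAvoiding :
    (G.induce (G.componentAvoiding N b)).Preconnected := by
  classical
  have hsub : ∀ {v} (p : G.Walk b v), (∀ w ∈ p.support, w ∉ N) →
      ∀ w ∈ p.support, w ∈ G.componentAvoiding N b := fun p hp w hw =>
    ⟨p.takeUntil w hw, fun u hu => hp u (p.support_takeUntil_subset_support hw hu)⟩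
  rintro ⟨u, ⟨p, hp⟩⟩ ⟨v, ⟨q, hq⟩⟩
  exact (p.induce _ (hsub p hp)).reachable.symm.trans (q.induce _ (hsub q hq)).reachable

end ComponentAvoiding

theorem IsClique.exists_dominating_not_adj {K : Set V} (hK : G.IsClique K)
    (h : ∃ a b, a ≠ b ∧ ¬G.Adj a b) :
    ∃ a, (∀ k ∈ K, k = a ∨ G.Adj a k) ∧ ∃ b, a ≠ b ∧ ¬G.Adj a b := by
  by_cases hKu : ∃ a ∈ K, ∃ b, a ≠ b ∧ ¬G.Adj a b
  · obtain ⟨a, haK, hb⟩ := hKu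
    exact ⟨a, fun k hk => (eq_or_ne k a).elim Or.inl fun hka => Or.inr (hK haK hk hka.symm), hb⟩
  · push Not at hKu
    obtain ⟨a, hb⟩ := h
    exact ⟨a, fun k hk => (eq_or_ne k a).elim Or.inl fun hka => Or.inr (hKu k hk a hka).symm, hb⟩

end SimpleGraph

section Chordal

variable {V : Type*} {G : SimpleGraph V}

theorem IsChordal.induce (hG : IsChordal G) (s : Set V) : IsChordal (G.induce s) :=
  fun n hn => ⟨fun e => (hG n hn).false ((Embedding.induce s).comp e)⟩

theorem IsChordal.not_isChordless (hG : IsChordal G) {v : V} {c : G.Walk v v} (hc : c.IsCycle)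
    (h4 : 4 ≤ c.length) : ¬c.IsChordless := by
  intro hcl
  set n := c.length with hn
  have hidx : ∀ i j, i < n → j < n → c.getVert i = c.getVert j → i = j := fun i j hi hj h =>
    hc.getVert_injOn' (show i ≤ n - 1 by omega) (show j ≤ n - 1 by omega) h
  have hlast : c.getVert n = c.getVert 0 := by rw [Walk.getVert_length, Walk.getVert_zero]
  refine (hG n h4).false ⟨⟨fun i => c.getVert i, fun i j h => Fin.ext (hidx _ _ i.2 j.2 h)⟩, ?_⟩
  intro i j
  change G.Adj (c.getVert i) (c.getVert j) ↔ _
  rw [cycleGraph_adj_iff_val (by omega)]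
  have hi := i.2
  have hj := j.2
  constructor
  · intro hadj
    obtain ⟨k, hk, hkij⟩ := (Walk.mk_mem_edges_iff_exists c).1
      (hcl.mem_edges (c.getVert_mem_support _) (c.getVert_mem_support _) hadj)
    rcases Nat.lt_or_ge (k + 1) n with hk1 | hk1
    · rcases Sym2.eq_iff.1 hkij with ⟨h1, h2⟩ | ⟨h1, h2⟩
      · have := hidx _ _ hk hi h1
        have := hidx _ _ hk1 hj h2
        omega
      · have := hidx _ _ hk hj h1
        have := hidx _ _ hk1 hi h2
        omega
    · rw [show k + 1 = n by omega, hlast] at hkij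
      rcases Sym2.eq_iff.1 hkij with ⟨h1, h2⟩ | ⟨h1, h2⟩
      · have := hidx _ _ hk hi h1
        have := hidx _ _ (by omega) hj h2
        omega
      · have := hidx _ _ hk hj h1
        have := hidx _ _ (by omega) hi h2
        omega
  · rintro (h | h | ⟨h1, h2⟩ | ⟨h1, h2⟩)
    · rw [← h]
      exact c.adj_getVert_succ (by omega)
    · rw [← h]
      exact (c.adj_getVert_succ (by omega)).symm
    · have := c.adj_getVert_succ (i := j) (by omega)
      rwa [h2, hlast, ← h1, G.adj_comm] at this
    · have := c.adj_getVert_succ (i := i) (by omega)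
      rwa [h2, hlast, ← h1] at this

theorem IsChordal.adj_of_isChordless {a x y : V} (hG : IsChordal G) {p : G.Walk x y}
    (hp : p.IsPath) (hpc : p.IsChordless) (hxy : x ≠ y) (ha : a ∉ p.support)
    (hax : G.Adj a x) (hay : G.Adj a y) (hnbr : ∀ w ∈ p.support, G.Adj a w → w = x ∨ w = y) :
    G.Adj x y := by
  by_contra hnxy
  have hlen : 2 ≤ p.length := by
    by_contra! h
    interval_cases hl : p.length
    · exact hxy (Walk.eq_of_length_eq_zero hl)
    · exact hnxy (Walk.adj_of_length_eq_one hl)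
  have hya : s(y, a) = s(a, y) := Sym2.eq_swap
  set c := Walk.cons hax (p.concat hay.symm)
  have hc : c.IsCycle := by
    refine (Walk.cons_isCycle_iff _ hax).2 ⟨(Walk.concat_isPath_iff _).2 ⟨hp, ha⟩, ?_⟩
    rw [Walk.edges_concat, List.concat_eq_append, List.mem_append, List.mem_singleton, hya]
    rintro (h | h)
    · exact ha (p.fst_mem_support_of_mem_edges h)
    · exact hxy (Sym2.congr_right.1 h)
  refine hG.not_isChordless hc (by simp only [c, Walk.length_cons, Walk.length_concat]; omega) ?_
  rw [Walk.isChordless_iff_forall_mem_edges]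
  have hsupp : ∀ w ∈ c.support, w = a ∨ w ∈ p.support := by
    simp [c, Walk.support_concat, or_comm]
  have hedges : ∀ e ∈ p.edges, e ∈ c.edges := by
    intro e he
    simp [c, Walk.edges_concat, he]
  have hapex : ∀ w ∈ p.support, G.Adj a w → s(a, w) ∈ c.edges := by
    intro w hw haw
    rcases hnbr w hw haw with rfl | rfl
    · simp [c]
    · simp [c, Walk.edges_concat, hya]
  intro u w hu hw huw
  rcases hsupp u hu with rfl | hup <;> rcases hsupp w hw with rfl | hwp
  · exact absurd huw (G.loopless.irrefl _)
  · exact hapex w hwp huw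
  · exact Sym2.eq_swap ▸ hapex u hup huw.symm
  · exact hedges _ (hpc.mem_edges hup hwp huw)

/-- `a` closes a shortest path through `C` between two non-adjacent such neighbours into an
induced cycle. -/
theorem IsChordal.isClique_setOf_adj_adj (hG : IsChordal G) (a : V) {C : Set V}
    (hC : (G.induce C).Preconnected) (haC : ∀ c ∈ C, c ≠ a ∧ ¬G.Adj a c) :
    G.IsClique {x | G.Adj a x ∧ ∃ c ∈ C, G.Adj x c} := by
  rintro x ⟨hax, cx, hcx, hxcx⟩ y ⟨hay, cy, hcy, hycy⟩ hxy
  set s : Set V := {w | w = x ∨ w = y ∨ w ∈ C}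
  obtain ⟨q⟩ := hC ⟨cx, hcx⟩ ⟨cy, hcy⟩
  obtain ⟨Q, hQ⟩ : ∃ Q : G.Walk cx cy, ∀ w ∈ Q.support, w ∈ C :=
    ⟨q.map (Embedding.induce C).toHom, fun w hw => q.mem_of_mem_support_map_induce hw⟩
  obtain ⟨W, hW⟩ : ∃ W : G.Walk x y, ∀ w ∈ W.support, w ∈ s := by
    refine ⟨Walk.cons hxcx (Q.concat hycy.symm), fun w hw => ?_⟩
    rw [Walk.support_cons, Walk.support_concat, List.mem_cons,
      List.mem_append, List.mem_singleton] at hw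
    rcases hw with rfl | hw | rfl
    · exact Or.inl rfl
    · exact Or.inr (Or.inr (hQ w hw))
    · exact Or.inr (Or.inl rfl)
  obtain ⟨P, hP⟩ := (W.induce s hW).reachable.exists_walk_length_eq_dist
  set p := P.map (Embedding.induce s).toHom
  have hps : ∀ w ∈ p.support, w ∈ s := fun w hw => P.mem_of_mem_support_map_induce hw
  refine hG.adj_of_isChordless ((P.isPath_of_length_eq_dist hP).map Subtype.val_injective)
    ((P.isChordless_of_length_eq_dist hP).map (Embedding.induce s)) hxy (fun ha => ?_) hax hay
    fun w hw haw => ?_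
  · rcases hps a ha with h | h | h
    · exact hax.ne h
    · exact hay.ne h
    · exact (haC a h).1 rfl
  · rcases hps w hw with h | h | h
    · exact Or.inl h
    · exact Or.inr h
    · exact absurd haw (haC w h).2

end Chordal

/-- Dirac's lemma, strengthened for the induction. Take `a` non-universal with `K ⊆ N[a]` and a
component `C` of `G - N[a]`: the neighbours `S` of `C` form a clique, so a simplicial vertex of
the smaller graph `G[C ∪ S]` outside `S` exists, and it is simplicial in `G`. -/
theorem IsChordal.exists_isSimplicial_notMem {V : Type*} [Finite V] {G : SimpleGraph V}
    (hG : IsChordal G) {K : Set V} (hK : G.IsClique K) (hKV : ∃ v, v ∉ K) :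
    ∃ v ∉ K, G.IsSimplicial v := by
  induction hn : Nat.card V using Nat.strong_induction_on generalizing V with
  | _ n ih =>
  by_cases hcomplete : ∀ a b : V, a ≠ b → G.Adj a b
  · obtain ⟨v, hv⟩ := hKV
    exact ⟨v, hv, fun x _ y _ hxy => hcomplete x y hxy⟩
  push Not at hcomplete
  obtain ⟨a, hKa, b, hab, hnab⟩ := hK.exists_dominating_not_adj hcomplete
  set N := insert a (G.neighborSet a)
  have hbN : b ∉ N := by simp [N, hab.symm, hnab]
  set C := G.componentAvoiding N b
  set S := {x | G.Adj a x ∧ ∃ c ∈ C, G.Adj x c}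
  have hCN : ∀ c ∈ C, c ≠ a ∧ ¬G.Adj a c := fun c hc => by
    simpa [N, not_or] using notMem_of_mem_componentAvoiding hc
  have hS : G.IsClique S := hG.isClique_setOf_adj_adj a preconnected_induce_componentAvoiding hCN
  set D := C ∪ S
  have hnbrD : ∀ c ∈ C, G.neighborSet c ⊆ D := by
    intro c hc w hw
    by_cases hwN : w ∈ N
    · rcases hwN with rfl | haw
      · exact absurd hw.symm (hCN c hc).2
      · exact Or.inr ⟨haw, c, hc, hw.symm⟩
    · exact Or.inl (mem_componentAvoiding_of_adj hc hw hwN)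
  have haD : a ∉ D := by
    rintro (haC | ⟨haa, -⟩)
    · exact (hCN a haC).1 rfl
    · exact G.loopless.irrefl a haa
  have hSD : (G.induce D).IsClique (Subtype.val ⁻¹' S) := fun x hx y hy hxy =>
    hS hx hy (Subtype.val_injective.ne hxy)
  obtain ⟨⟨z, hzD⟩, hzS, hz⟩ := ih (Nat.card D) (hn ▸ Finite.card_subtype_lt haD)
    (hG.induce D) hSD ⟨⟨b, Or.inl (mem_componentAvoiding_self hbN)⟩, fun hbS => hnab hbS.1⟩ rfl
  have hzC : z ∈ C := hzD.resolve_right hzS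
  exact ⟨z, fun hzK => notMem_of_mem_componentAvoiding hzC (hKa z hzK),
    hz.of_induce (hnbrD z hzC)⟩

namespace SimpleGraph

section

variable {V : Type*} {G : SimpleGraph V}

def higherNeighborSet (G : SimpleGraph V) (r : V → ℕ) (v : V) : Set V :=
  {w | G.Adj v w ∧ r v < r w}

def IsPerfectEliminationOrder (G : SimpleGraph V) (r : V → ℕ) : Prop :=
  Function.Injective r ∧ ∀ v, G.IsClique (G.higherNeighborSet r v)

theorem IsSimplicial.exists_isPerfectEliminationOrder {v : V} (hv : G.IsSimplicial v)
    {r : ({v}ᶜ : Set V) → ℕ} (hr : (G.induce {v}ᶜ).IsPerfectEliminationOrder r) :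
    ∃ r', G.IsPerfectEliminationOrder r' := by
  classical
  set r' : V → ℕ := fun u => if h : u = v then 0 else r ⟨u, h⟩ + 1
  have hr'v : r' v = 0 := dif_pos rfl
  have hr'u : ∀ u (hu : u ≠ v), r' u = r ⟨u, hu⟩ + 1 := fun u hu => dif_neg hu
  refine ⟨r', fun x y hxy => ?_, fun u => ?_⟩
  · by_cases hx : x = v <;> by_cases hy : y = v
    · rw [hx, hy]
    · rw [hx, hr'v, hr'u y hy] at hxy
      omega
    · rw [hy, hr'v, hr'u x hx] at hxy
      omega
    · rw [hr'u x hx, hr'u y hy, Nat.add_right_cancel_iff] at hxy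
      exact congrArg Subtype.val (hr.1 hxy)
  · by_cases hu : u = v
    · subst hu
      exact hv.subset fun w hw => hw.1
    · have hne : ∀ w ∈ G.higherNeighborSet r' u, w ≠ v := by
        rintro w ⟨-, hw⟩ rfl
        omega
      have hmem : ∀ w (hw : w ∈ G.higherNeighborSet r' u),
          (⟨w, hne w hw⟩ : ({v}ᶜ : Set V)) ∈ (G.induce {v}ᶜ).higherNeighborSet r ⟨u, hu⟩ := by
        rintro w ⟨huw, hw⟩
        have := hr'u w (hne w ⟨huw, hw⟩)
        rw [hr'u u hu] at hw
        exact ⟨huw, by omega⟩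
      intro x hx y hy hxy
      exact hr.2 _ (hmem x hx) (hmem y hy) fun h => hxy (congrArg Subtype.val h)

end

section Elimination

variable {V : Type*} (G : SimpleGraph V) (r : V → ℕ)

open Classical in
/-- The extra vertex `none` is the root of the elimination tree; it keeps the tree nonempty even
for empty `V`. -/
noncomputable def eliminationParent : Option V → Option V
  | none => none
  | some v =>
    if h : (G.higherNeighborSet r v).Nonempty then some (Function.argminOn r _ h) else none

def eliminationTree : SimpleGraph (Option V) :=
  fromRel fun i j => G.eliminationParent r i = j

def eliminationBag : Option V → Set V
  | none => ∅
  | some v => insert v (G.higherNeighborSet r v)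

variable {G r}

theorem eliminationParent_some {v : V} (h : (G.higherNeighborSet r v).Nonempty) :
    G.eliminationParent r (some v) = some (Function.argminOn r _ h) :=
  dif_pos h

theorem eliminationTree_adj_some {v : V} (h : (G.higherNeighborSet r v).Nonempty) :
    (G.eliminationTree r).Adj (some v) (some (Function.argminOn r _ h)) := by
  refine (fromRel_adj _ _ _).2 ⟨fun he => ?_, Or.inl (eliminationParent_some h)⟩
  have := (Function.argminOn_mem r _ h).2
  rw [← Option.some_inj.1 he] at this
  exact lt_irrefl _ this

theorem isTree_eliminationTree [Finite V] : (G.eliminationTree r).IsTree := by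
  obtain ⟨B, hB⟩ := (Set.finite_range r).bddAbove
  have hrB : ∀ v, r v ≤ B := fun v => hB ⟨v, rfl⟩
  refine isTree_fromRel_parent none _ (fun i => i.elim 0 fun v => B + 1 - r v) rfl ?_
  rintro (_ | v) hv
  · exact absurd rfl hv
  · by_cases h : (G.higherNeighborSet r v).Nonempty
    · have := (Function.argminOn_mem r _ h).2
      have := hrB (Function.argminOn r _ h)
      simp only [eliminationParent_some h, Option.elim_some]
      omega
    · simp only [eliminationParent, dif_neg h, Option.elim_none, Option.elim_some]
      have := hrB v
      omega

theorem IsPerfectEliminationOrder.isClique_eliminationBag (hr : G.IsPerfectEliminationOrder r) :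
    ∀ i, G.IsClique (G.eliminationBag r i)
  | none => isClique_empty
  | some v => (hr.2 v).insert fun _ hw _ => hw.1

theorem IsPerfectEliminationOrder.connected_induce_eliminationBag [Finite V]
    (hr : G.IsPerfectEliminationOrder r) (v : V) :
    ((G.eliminationTree r).induce {i | v ∈ G.eliminationBag r i}).Connected := by
  refine connected_of_forall_exists_adj_lt ⟨some v, Set.mem_insert v _⟩
    (fun i => r v - i.1.elim 0 r) ?_
  rintro ⟨_ | u, hu⟩ hne
  · exact absurd hu (Set.notMem_empty v)
  have hvu : v ∈ G.higherNeighborSet r u :=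
    (Set.mem_insert_iff.1 hu).resolve_left fun h => hne (by subst h; rfl)
  set p := Function.argminOn r _ ⟨v, hvu⟩
  have hp : p ∈ G.higherNeighborSet r u := Function.argminOn_mem r _ _
  have hpv : r p ≤ r v := Function.argminOn_le r _ hvu
  have hvp : v ∈ G.eliminationBag r (some p) := by
    by_cases h : p = v
    · exact h ▸ Set.mem_insert p _
    · exact Or.inr ⟨hr.2 u hp hvu h, lt_of_le_of_ne hpv (hr.1.ne h)⟩
  refine ⟨⟨some p, hvp⟩, eliminationTree_adj_some ⟨v, hvu⟩, ?_⟩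
  have := hp.2
  simp only [Option.elim_some]
  omega

theorem IsPerfectEliminationOrder.isTreeDecomposition [Finite V]
    (hr : G.IsPerfectEliminationOrder r) :
    IsTreeDecomposition G (G.eliminationTree r) (G.eliminationBag r) := by
  refine ⟨isTree_eliminationTree, fun v => ⟨some v, Set.mem_insert v _⟩, fun u w huw => ?_,
    hr.connected_induce_eliminationBag⟩
  rcases (hr.1.ne huw.ne).lt_or_gt with h | h
  · exact ⟨some u, Set.mem_insert u _, Or.inr ⟨huw, h⟩⟩
  · exact ⟨some w, Or.inr ⟨huw.symm, h⟩, Set.mem_insert w _⟩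

end Elimination

end SimpleGraph

theorem IsChordal.exists_isPerfectEliminationOrder {V : Type*} [Finite V] {G : SimpleGraph V}
    (hG : IsChordal G) : ∃ r, G.IsPerfectEliminationOrder r := by
  induction hn : Nat.card V using Nat.strong_induction_on generalizing V with
  | _ n ih =>
  cases isEmpty_or_nonempty V with
  | inl _ => exact ⟨fun _ => 0, fun x => isEmptyElim x, fun v => isEmptyElim v⟩
  | inr hV =>
    obtain ⟨v, -, hv⟩ := hG.exists_isSimplicial_notMem isClique_empty
      ⟨hV.some, Set.notMem_empty _⟩
    obtain ⟨r, hr⟩ := ih _ (hn ▸ Finite.card_subtype_lt (x := v) (by simp)) (hG.induce {v}ᶜ) rfl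
    exact hv.exists_isPerfectEliminationOrder hr

/-- Theorem 5.9 (i) ↔ (iv): a finite graph has a tree-decomposition into cliques if and
only if it is chordal. -/
theorem treeDecomposition_cliques_iff_chordal {V : Type} [Fintype V]
    (G : SimpleGraph V) :
    (∃ (ι : Type) (T : SimpleGraph ι) (bags : ι → Set V),
        IsTreeDecomposition G T bags ∧ ∀ i, G.IsClique (bags i)) ↔ IsChordal G := by
  refine ⟨fun ⟨_, _, _, hdec, hclique⟩ => hdec.isChordal hclique, fun hG => ?_⟩
  obtain ⟨r, hr⟩ := hG.exists_isPerfectEliminationOrder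
  exact ⟨Option V, G.eliminationTree r, G.eliminationBag r, hr.isTreeDecomposition,
    hr.isClique_eliminationBag⟩
end

section
/- Let V be a nonempty finite set, U the universe of oriented bipartitions (A,B) of V (A ∪ B = V, A ∩ B = ∅), S⃗ ⊆ U a submodular separation system, m ≥ 1, and n ≥ 2 (possibly infinite). Let F = F_m^n be the family of sets F ⊆ U with |F| < n and |⋂_{(A,B)∈F} B| < m, and F* the stars in F. Then every F*-tangle of S is an F-tangle. -/
-- An oriented bipartition `(A, B)` of `V` is represented by its first side `A`, with
-- `B = Aᶜ`; the involution is complementation, the order is inclusion.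

/-- Membership in the family `𝓕ₘⁿ`: `F` has fewer than `n` elements and the right-hand
sides of its members intersect in fewer than `m` points. -/
def MemF {V : Type*} (m : ℕ) (n : ℕ∞) (F : Set (Set V)) : Prop :=
  (F.ncard : ℕ∞) < n ∧ (⋂ A ∈ F, Aᶜ).ncard < m

/-- `σ` is a star of oriented bipartitions: non-degenerate and pairwise pointing towards
each other (`A ≤ star A' `, i.e. `A ⊆ A'ᶜ`). -/
def IsStarBip {V : Type*} (σ : Set (Set V)) : Prop :=
  (∀ A ∈ σ, A ≠ Aᶜ) ∧ ∀ A ∈ σ, ∀ A' ∈ σ, A ≠ A' → A ⊆ A'ᶜ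

/-- Measure used for the minimal-counterexample argument. -/
noncomputable def bipMeasure {V : Type*} [Fintype V] (F : Set (Set V)) : ℕ :=
  ∑ B ∈ (Set.toFinite F).toFinset, (B.ncard + 1)

/-- Lemma 4.7: for a submodular separation system of bipartitions of a finite nonempty
set and `𝓕 = 𝓕ₘⁿ` (`m ≥ 1`, `n ≥ 2`, possibly `n = ∞`), every `𝓕*`-tangle of `S` is an
`𝓕`-tangle. -/
theorem Fstar_tangle_is_F_tangle {V : Type*} [Fintype V] (hV : Nonempty V)
    (S : Set (Set V)) (hSstar : ∀ A ∈ S, Aᶜ ∈ S)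
    (hsub : ∀ A ∈ S, ∀ B ∈ S, A ∪ B ∈ S ∨ A ∩ B ∈ S)
    (m : ℕ) (hm : 1 ≤ m) (n : ℕ∞) (hn : 2 ≤ n)
    (O : Set (Set V)) (hOS : O ⊆ S)
    (horient : ∀ A ∈ S, (A ∈ O ∨ Aᶜ ∈ O) ∧ ¬(A ∈ O ∧ Aᶜ ∈ O))
    (hcons : ∀ A B : Set V, B ∈ O → A ⊆ B →
        ({A, Aᶜ} : Set (Set V)) ≠ {B, Bᶜ} → Aᶜ ∉ O)
    -- `O` avoids the stars in `𝓕ₘⁿ`: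
    (hstar : ∀ F ⊆ O, IsStarBip F → ¬ MemF m n F) :
    -- then `O` avoids all of `𝓕ₘⁿ`:
    ∀ F ⊆ O, ¬ MemF m n F := by
  classical
  by_contra hcon
  push_neg at hcon
  obtain ⟨F₀, hF₀O, hF₀⟩ := hcon
  -- `V ∉ O`, since `{univ}` would be a star in `𝓕`.
  have hne0 : ∀ A : Set V, A ≠ Aᶜ := by
    intro A h
    obtain ⟨x⟩ := hV
    have := Set.ext_iff.mp h x
    simp only [Set.mem_compl_iff] at this
    tauto
  have hVO : (Set.univ : Set V) ∉ O := by
    intro hU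
    refine hstar {Set.univ} (by simpa using hU) ⟨?_, ?_⟩ ⟨?_, ?_⟩
    · intro A hA
      exact hne0 A
    · intro A hA A' hA' hne
      rw [Set.mem_singleton_iff] at hA hA'
      subst hA; subst hA'
      exact absurd rfl hne
    · rw [Set.ncard_singleton]
      exact lt_of_lt_of_le (by norm_num) hn
    · simp only [Set.mem_singleton_iff, Set.iInter_iInter_eq_left, Set.compl_univ,
        Set.ncard_empty]
      omega
  -- downward closure of `O` within `S`
  have hdown : ∀ A B : Set V, A ∈ S → B ∈ O → A ⊆ B → A ∈ O := by
    intro A B hAS hBO hAB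
    rcases (horient A hAS).1 with h | h
    · exact h
    exfalso
    by_cases hne : ({A, Aᶜ} : Set (Set V)) = {B, Bᶜ}
    · have hAm : A ∈ ({B, Bᶜ} : Set (Set V)) := by
        rw [← hne]; exact Set.mem_insert _ _
      rw [Set.mem_insert_iff, Set.mem_singleton_iff] at hAm
      rcases hAm with rfl | rfl
      · exact (horient A hAS).2 ⟨hBO, h⟩
      · have hB : B = Set.univ := by
          ext x
          simp only [Set.mem_univ, iff_true]
          by_contra hx
          exact hx (hAB hx)
        exact hVO (hB ▸ hBO)
    · exact hcons A B hBO hAB hne h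
  -- minimal counterexample
  have hP : ∃ k, ∃ F, F ⊆ O ∧ MemF m n F ∧ bipMeasure F = k :=
    ⟨bipMeasure F₀, F₀, hF₀O, hF₀, rfl⟩
  obtain ⟨F, hFO, hF, hμF⟩ := Nat.find_spec hP
  have hmin : ∀ F', F' ⊆ O → MemF m n F' → bipMeasure F ≤ bipMeasure F' := by
    intro F' h1 h2
    rw [hμF]
    exact Nat.find_min' hP ⟨F', h1, h2, rfl⟩
  -- key step: no crossing pair in F
  have key : ∀ A A' : Set V, A ∈ F → A' ∈ F → A ≠ A' → (A ∩ A').Nonempty →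
      A ∩ A'ᶜ ∈ S → False := by
    intro A A' hA hA' hne ⟨x, hxA, hxA'⟩ hCS
    set C := A ∩ A'ᶜ with hCdef
    have hCsub : C ⊆ A := Set.inter_subset_left
    have hCO : C ∈ O := hdown C A hCS (hFO hA) hCsub
    have hxC : x ∉ C := fun hx => hx.2 hxA'
    have hCA : C ≠ A := fun h => hxC (h.symm ▸ hxA)
    set F' : Set (Set V) := insert C (F \ {A}) with hF'def
    have hF'O : F' ⊆ O := by
      intro B hB
      rcases Set.mem_insert_iff.mp hB with rfl | hB'
      · exact hCO
      · exact hFO hB'.1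
    have hMem' : MemF m n F' := by
      constructor
      · have h1 : F'.ncard ≤ F.ncard := by
          have h2 := Set.ncard_insert_le C (F \ {A})
          rw [Set.ncard_diff_singleton_add_one hA (Set.toFinite F)] at h2
          exact h2
        exact lt_of_le_of_lt (Nat.cast_le.mpr h1) hF.1
      · have hsubJ : (⋂ B ∈ F', Bᶜ) ⊆ ⋂ B ∈ F, Bᶜ := by
          intro y hy
          simp only [Set.mem_iInter] at hy ⊢
          intro B hB
          by_cases hBA : B = A
          · subst hBA
            have h1 := hy C (Set.mem_insert _ _)
            have h2 := hy A' (Set.mem_insert_of_mem _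
              ⟨hA', fun h => hne (Set.mem_singleton_iff.mp h).symm⟩)
            intro hyB
            exact h1 ⟨hyB, h2⟩
          · exact hy B (Set.mem_insert_of_mem _ ⟨hB, hBA⟩)
        exact lt_of_le_of_lt (Set.ncard_le_ncard hsubJ (Set.toFinite _)) hF.2
    have hAt : A ∈ (Set.toFinite F).toFinset := (Set.toFinite F).mem_toFinset.mpr hA
    have ht' : (Set.toFinite F').toFinset =
        insert C (((Set.toFinite F).toFinset).erase A) := by
      ext B
      simp only [Set.Finite.mem_toFinset, Finset.mem_insert, Finset.mem_erase, hF'def,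
        Set.mem_insert_iff, Set.mem_diff, Set.mem_singleton_iff]
      tauto
    have hsum : ∑ B ∈ ((Set.toFinite F).toFinset).erase A, (B.ncard + 1) + (A.ncard + 1)
        = bipMeasure F := Finset.sum_erase_add _ _ hAt
    have hCcard : C.ncard < A.ncard :=
      Set.ncard_lt_ncard (HasSubset.Subset.ssubset_of_ne hCsub hCA) (Set.toFinite A)
    have hlt : bipMeasure F' < bipMeasure F := by
      show ∑ B ∈ (Set.toFinite F').toFinset, (B.ncard + 1) < bipMeasure F
      rw [ht']
      by_cases hC : C ∈ ((Set.toFinite F).toFinset).erase A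
      · rw [Finset.insert_eq_self.mpr hC]
        omega
      · rw [Finset.sum_insert hC]
        omega
    exact absurd (hmin F' hF'O hMem') (by omega)
  -- hence F is a star, contradiction
  have hstarF : IsStarBip F := by
    constructor
    · intro A _
      exact hne0 A
    · intro A hA A' hA' hne
      by_contra hnsub
      obtain ⟨x, hxA, hxA'⟩ := Set.not_subset.mp hnsub
      have hxA'' : x ∈ A' := by simpa using hxA'
      rcases hsub A (hOS (hFO hA)) A'ᶜ (hSstar A' (hOS (hFO hA'))) with h | h
      · have h2 : A' ∩ Aᶜ ∈ S := by
          have h3 := hSstar _ h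
          rwa [Set.compl_union, compl_compl, Set.inter_comm] at h3
        exact key A' A hA' hA (Ne.symm hne) ⟨x, hxA'', hxA⟩ h2
      · exact key A A' hA hA' hne ⟨x, hxA, hxA''⟩ h
  exact hstar F hFO hstarF hF
end

section
/- With U the universe of oriented bipartitions of a finite nonempty set V, m ≥ 1, n ≥ 2 (possibly infinite), and F = F_m^n = {F ⊆ U : |F| < n and |⋂_{(A,B)∈F} B| < m}, the set F* of stars in F is closed under shifting in any separation system S⃗ ⊆ U: if s⃗ = (U₀,W₀) ∈ S⃗ emulates a nontrivial r⃗ in S⃗, σ ⊆ S⃗ \ {r⃗*} is a star in F*, and x⃗ ∈ σ with x⃗ ≥ r⃗, then the shift σ_{x⃗}^{s⃗} lies in F*. -/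
/-- `r` is trivial in `S`. -/
def IsTrivialBip {V : Type*} (S : Set (Set V)) (r : Set V) : Prop :=
  ∃ t ∈ S, r ⊂ t ∧ r ⊂ tᶜ

/-- `s` emulates `r` in `S`. -/
def EmulatesBip {V : Type*} (S : Set (Set V)) (s r : Set V) : Prop :=
  r ⊆ s ∧ ∀ t ∈ S, t ≠ rᶜ → r ⊆ t → s ∪ t ∈ S

/-! Shifting replaces `x` by the larger `x ∪ s` and every other member `y` by the smaller
`y ∩ sᶜ`. The new members stay pairwise disjoint because `s` is disjoint from each `y ∩ sᶜ`;
there are no more of them than before; and each point outside all of them lies outside `s`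
and hence outside every member of `σ`, so the intersection of the complements can only shrink. -/

section StarShift

variable {V : Type*} {s x : Set V} {σ : Set (Set V)}

/-- The shift `σₓˢ` of `σ`, in the encoding of bipartitions by their first side. -/
def starShift (s x : Set V) (σ : Set (Set V)) : Set (Set V) :=
  insert (x ∪ s) ((· ∩ sᶜ) '' (σ \ {x}))

theorem isStarBip_iff_pairwise_disjoint :
    IsStarBip σ ↔ (∀ A ∈ σ, A ≠ Aᶜ) ∧ σ.Pairwise Disjoint := by
  simp only [IsStarBip, Set.Pairwise, Set.subset_compl_iff_disjoint_right]

theorem IsStarBip.starShift (hσ : IsStarBip σ) (hx : x ∈ σ) : IsStarBip (starShift s x σ) := by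
  rw [isStarBip_iff_pairwise_disjoint] at hσ ⊢
  -- `x ≠ xᶜ` forces `V` to be nonempty, and then no set equals its complement.
  have : Nontrivial (Set V) := nontrivial_of_ne x xᶜ (hσ.1 x hx)
  refine ⟨fun _ _ => ne_compl_self, ?_⟩
  have hshrunk : ((· ∩ sᶜ) '' (σ \ {x})).Pairwise Disjoint := by
    rintro _ ⟨y, ⟨hy, -⟩, rfl⟩ _ ⟨z, ⟨hz, -⟩, rfl⟩ hne
    exact (hσ.2 hy hz fun h => hne (h ▸ rfl)).mono Set.inter_subset_left Set.inter_subset_left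
  refine Set.pairwise_insert_of_symm.2 ⟨hshrunk, ?_⟩
  rintro _ ⟨y, ⟨hy, hyx⟩, rfl⟩ -
  exact ((hσ.2 hx hy (Ne.symm hyx)).inter_right _).union_left
    (disjoint_compl_right.inter_right' y)

theorem ncard_starShift_le (hσ : σ.Finite) (hx : x ∈ σ) :
    (starShift s x σ).ncard ≤ σ.ncard :=
  calc (starShift s x σ).ncard
      ≤ ((· ∩ sᶜ) '' (σ \ {x})).ncard + 1 := Set.ncard_insert_le _ _
    _ ≤ (σ \ {x}).ncard + 1 := Nat.add_le_add_right (Set.ncard_image_le hσ.sdiff) 1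
    _ = σ.ncard := Set.ncard_sdiff_singleton_add_one hx hσ

theorem biInter_compl_starShift_subset :
    ⋂ A ∈ starShift s x σ, Aᶜ ⊆ ⋂ A ∈ σ, Aᶜ := by
  rw [starShift, Set.biInter_insert, Set.biInter_image]
  rintro v ⟨hvxs, hv⟩
  rw [Set.compl_union] at hvxs
  refine Set.mem_iInter₂.2 fun A hA => ?_
  by_cases hAx : A = x
  · exact hAx ▸ hvxs.1
  · exact fun hvA => Set.mem_iInter₂.1 hv A ⟨hA, hAx⟩ ⟨hvA, hvxs.2⟩

theorem MemF.starShift [Finite V] {m : ℕ} {n : ℕ∞} (h : MemF m n σ) (hx : x ∈ σ) :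
    MemF m n (starShift s x σ) :=
  ⟨(Nat.cast_le.2 (ncard_starShift_le σ.toFinite hx)).trans_lt h.1,
    (Set.ncard_le_ncard biInter_compl_starShift_subset (Set.toFinite _)).trans_lt h.2⟩

end StarShift

theorem F_closed_under_shifting_general {V : Type*} [Fintype V]
    (m : ℕ) (n : ℕ∞)
    (s : Set V)
    (σ : Set (Set V))
    (hσstar : IsStarBip σ) (hσF : MemF m n σ)
    (x : Set V) (hx : x ∈ σ) :
    IsStarBip (insert (x ∪ s) ((fun y => y ∩ sᶜ) '' (σ \ {x}))) ∧
    MemF m n (insert (x ∪ s) ((fun y => y ∩ sᶜ) '' (σ \ {x}))) :=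
  ⟨hσstar.starShift hx, hσF.starShift hx⟩

/-- Lemma 4.8: the set `𝓕*` of stars in `𝓕 = 𝓕ₘⁿ` is closed under shifting: if
`s = (U₀, W₀) ∈ S` emulates a nontrivial `r` in `S`, `σ ⊆ S \ {rᶜ}` is a star in `𝓕*`
and `x ∈ σ` with `r ≤ x`, then the shift `σₓˢ` (replacing `x = (A,B)` by
`(A ∪ U₀, B ∩ W₀)` and every other `(A',B')` by `(A' ∩ W₀, B' ∪ U₀)`) again lies in
`𝓕*`. -/
theorem F_closed_under_shifting {V : Type*} [Fintype V] (hV : Nonempty V)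
    (S : Set (Set V)) (hSstar : ∀ A ∈ S, Aᶜ ∈ S)
    (m : ℕ) (hm : 1 ≤ m) (n : ℕ∞) (hn : 2 ≤ n)
    (s r : Set V) (hs : s ∈ S) (hr : r ∈ S)
    (hnt : ¬ IsTrivialBip S r)
    (hem : EmulatesBip S s r)
    (σ : Set (Set V)) (hσS : σ ⊆ S \ {rᶜ})
    (hσstar : IsStarBip σ) (hσF : MemF m n σ)
    (x : Set V) (hx : x ∈ σ) (hrx : r ⊆ x) :
    IsStarBip (insert (x ∪ s) ((fun y => y ∩ sᶜ) '' (σ \ {x}))) ∧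
    MemF m n (insert (x ∪ s) ((fun y => y ∩ sᶜ) '' (σ \ {x}))) :=
  F_closed_under_shifting_general m n s σ hσstar hσF x hx
end

section
/- Let V be a finite set with a fixed cyclic ordering, U the universe of all oriented bipartitions of V with a submodular order function |·| (symmetric: |s⃗| = |s⃗*|; submodular: |s⃗ ∨ t⃗| + |s⃗ ∧ t⃗| ≤ |s⃗| + |t⃗|) under which (∅,V) has order 0. Then for every k > 0, the set S⃗_k of circle separations of order < k is a submodular separation system: for any two of its elements, their join or their meet lies in S⃗_k. -/
/-!
Fix a point `p` outside both arcs: measuring every point by its clockwise offset from `p`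
cuts the circle open, and each arc avoiding `p` becomes an interval `[lo, hi)` of offsets.
Unions of overlapping intervals and intersections of intervals are intervals, so for circle
separations `A`, `B` the join `A ∪ B` is again one unless `A ∩ B = ∅`, and dually the meet
`A ∩ B` is one unless `A ∪ B = V`. In those degenerate cases the meet (resp. join) is `(∅, V)`
(resp. `(V, ∅)`), of order `0 < k`; otherwise both are circle separations and submodularity
puts one of them below `k`.
-/

/-- `A` is an arc of the cyclic order on `Fin N`: a (possibly empty) contiguous segment. -/
def IsArc {N : ℕ} [NeZero N] (A : Set (Fin N)) : Prop :=
  ∃ (a : Fin N) (len : ℕ), A = {x : Fin N | ∃ i : ℕ, i < len ∧ x = a + (Fin.ofNat N i : Fin N)}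

/-- An oriented circle separation `(A, Aᶜ)` of `Fin N`, represented by its first side:
both sides are arcs of the cyclic order. -/
def IsCircleSep {N : ℕ} [NeZero N] (A : Set (Fin N)) : Prop :=
  IsArc A ∧ IsArc Aᶜ

open Set

variable {N : ℕ} [NeZero N] {A B : Set (Fin N)}

def offsetIco (p : Fin N) (lo hi : ℕ) : Set (Fin N) :=
  {x | (x - p).val ∈ Ico lo hi}

lemma offsetIco_eq_offsetIco_sub {a p : Fin N} {m : ℕ} (hfit : (a - p).val + m ≤ N) :
    offsetIco a 0 m = offsetIco p (a - p).val ((a - p).val + m) := by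
  ext x
  have hx : x - a = (x - p) - (a - p) := (sub_sub_sub_cancel_right x a p).symm
  simp only [offsetIco, mem_ofPred_eq, mem_Ico, zero_le, true_and, hx]
  rcases le_or_gt (a - p) (x - p) with hle | hlt
  · rw [Fin.coe_sub_iff_le.2 hle]
    have := Fin.le_def.1 hle
    omega
  · rw [Fin.coe_sub_iff_lt.2 hlt]
    have := Fin.lt_def.1 hlt
    omega

lemma isArc_iff_eq_offsetIco : IsArc A ↔ ∃ a : Fin N, ∃ m ≤ N, A = offsetIco a 0 m := by
  have hseg : ∀ (a : Fin N) (len : ℕ),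
      {x : Fin N | ∃ i : ℕ, i < len ∧ x = a + Fin.ofNat N i} = offsetIco a 0 (min len N) := by
    intro a len
    ext x
    simp only [offsetIco, mem_ofPred_eq, mem_Ico, zero_le, true_and, lt_min_iff, Fin.is_lt,
      and_true]
    constructor
    · rintro ⟨i, hi, rfl⟩
      rw [add_sub_cancel_left, Fin.val_ofNat]
      exact (Nat.mod_le _ _).trans_lt hi
    · intro hx
      exact ⟨_, hx, by rw [Fin.ofNat_val_eq_self, add_sub_cancel]⟩
  constructor
  · rintro ⟨a, len, rfl⟩
    exact ⟨a, _, min_le_right _ _, hseg a len⟩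
  · rintro ⟨a, m, hm, rfl⟩
    exact ⟨a, m, by rw [hseg, min_eq_left hm]⟩

lemma isArc_offsetIco (p : Fin N) (lo : ℕ) {hi : ℕ} (hhi : hi ≤ N) :
    IsArc (offsetIco p lo hi) := by
  rw [isArc_iff_eq_offsetIco]
  rcases le_or_gt hi lo with hle | hlt
  · refine ⟨p, 0, Nat.zero_le _, ?_⟩
    ext x
    simp only [offsetIco, mem_ofPred_eq, mem_Ico]
    omega
  · have hlo : (p + Fin.ofNat N lo - p).val = lo := by
      rw [add_sub_cancel_left, Fin.val_ofNat, Nat.mod_eq_of_lt (by omega)]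
    refine ⟨p + Fin.ofNat N lo, hi - lo, by omega, ?_⟩
    rw [offsetIco_eq_offsetIco_sub (p := p) (by omega), hlo, Nat.add_sub_cancel' hlt.le]

lemma isArc_empty : IsArc (∅ : Set (Fin N)) := by
  convert isArc_offsetIco (0 : Fin N) 0 (Nat.zero_le N)
  simp [offsetIco]

lemma isArc_univ : IsArc (univ : Set (Fin N)) := by
  convert isArc_offsetIco (0 : Fin N) 0 le_rfl
  simp [offsetIco]

lemma IsArc.exists_eq_offsetIco (hA : IsArc A) {p : Fin N} (hp : p ∉ A) :
    ∃ lo hi, hi ≤ N ∧ A = offsetIco p lo hi := by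
  obtain ⟨a, m, hm, rfl⟩ := isArc_iff_eq_offsetIco.1 hA
  simp only [offsetIco, mem_ofPred_eq, mem_Ico, zero_le, true_and, not_lt] at hp
  -- the offsets of `p` from `a` and of `a` from `p` add up to `N` (or are both `0`)
  have hfit : (a - p).val + m ≤ N := by
    rcases lt_trichotomy a p with hap | rfl | hpa
    · rw [Fin.coe_sub_iff_lt.2 hap]
      rw [Fin.coe_sub_iff_le.2 hap.le] at hp
      omega
    · simp only [sub_self, Fin.val_zero] at hp ⊢
      omega
    · rw [Fin.coe_sub_iff_le.2 hpa.le]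
      rw [Fin.coe_sub_iff_lt.2 hpa] at hp
      have := a.isLt
      omega
  exact ⟨_, _, hfit, offsetIco_eq_offsetIco_sub hfit⟩

lemma IsArc.union (hA : IsArc A) (hB : IsArc B) (hAB : (A ∩ B).Nonempty) : IsArc (A ∪ B) := by
  by_cases hU : A ∪ B = univ
  · exact hU ▸ isArc_univ
  obtain ⟨p, hp⟩ := (ne_univ_iff_exists_notMem _).1 hU
  rw [mem_union, not_or] at hp
  obtain ⟨lo₁, hi₁, h₁, rfl⟩ := hA.exists_eq_offsetIco hp.1
  obtain ⟨lo₂, hi₂, h₂, rfl⟩ := hB.exists_eq_offsetIco hp.2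
  obtain ⟨q, hq₁, hq₂⟩ := hAB
  have hunion : offsetIco p lo₁ hi₁ ∪ offsetIco p lo₂ hi₂ =
      offsetIco p (min lo₁ lo₂) (max hi₁ hi₂) := by
    simp only [offsetIco, mem_ofPred_eq, mem_Ico] at hq₁ hq₂
    ext x
    simp only [offsetIco, mem_union, mem_ofPred_eq, mem_Ico]
    omega
  exact hunion ▸ isArc_offsetIco p _ (max_le h₁ h₂)

lemma IsArc.inter (hA : IsArc A) (hB : IsArc B) (hAB : A ∪ B ≠ univ) : IsArc (A ∩ B) := by
  obtain ⟨p, hp⟩ := (ne_univ_iff_exists_notMem _).1 hAB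
  rw [mem_union, not_or] at hp
  obtain ⟨lo₁, hi₁, h₁, rfl⟩ := hA.exists_eq_offsetIco hp.1
  obtain ⟨lo₂, hi₂, h₂, rfl⟩ := hB.exists_eq_offsetIco hp.2
  have hinter : offsetIco p lo₁ hi₁ ∩ offsetIco p lo₂ hi₂ =
      offsetIco p (max lo₁ lo₂) (min hi₁ hi₂) := by
    ext x
    simp only [offsetIco, mem_inter_iff, mem_ofPred_eq, mem_Ico]
    omega
  exact hinter ▸ isArc_offsetIco p _ (min_le_of_left_le h₁)

lemma IsCircleSep.compl (hA : IsCircleSep A) : IsCircleSep Aᶜ :=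
  ⟨hA.2, (compl_compl A).symm ▸ hA.1⟩

lemma isCircleSep_compl_iff : IsCircleSep Aᶜ ↔ IsCircleSep A :=
  ⟨fun h => compl_compl A ▸ h.compl, IsCircleSep.compl⟩

lemma isCircleSep_empty : IsCircleSep (∅ : Set (Fin N)) :=
  ⟨isArc_empty, compl_empty (α := Fin N) ▸ isArc_univ⟩

lemma isCircleSep_univ : IsCircleSep (univ : Set (Fin N)) :=
  compl_empty (α := Fin N) ▸ isCircleSep_empty.compl

lemma IsCircleSep.union_or_inter_eq_empty (hA : IsCircleSep A) (hB : IsCircleSep B) :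
    IsCircleSep (A ∪ B) ∨ A ∩ B = ∅ := by
  rcases (A ∩ B).eq_empty_or_nonempty with h | h
  · exact .inr h
  refine .inl ⟨hA.1.union hB.1 h, ?_⟩
  rw [compl_union]
  exact hA.2.inter hB.2 (by rw [← compl_inter]; exact compl_ne_univ.2 h)

lemma IsCircleSep.inter_or_union_eq_univ (hA : IsCircleSep A) (hB : IsCircleSep B) :
    IsCircleSep (A ∩ B) ∨ A ∪ B = univ := by
  simpa only [← compl_inter, ← compl_union, isCircleSep_compl_iff, compl_empty_iff] using
    hA.compl.union_or_inter_eq_empty hB.compl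

/-- Lemma 5.12: given a submodular order function on the universe of bipartitions of a
finite cyclically ordered set under which `(∅, V)` has order `0`, for every `k > 0` the
set `S_k` of circle separations of order `< k` is a submodular separation system. -/
theorem circle_separations_submodular {N : ℕ} [NeZero N]
    (f : Set (Fin N) → ℝ)
    (hsymm : ∀ A : Set (Fin N), f A = f Aᶜ)
    (hsub : ∀ A B : Set (Fin N), f (A ∪ B) + f (A ∩ B) ≤ f A + f B)
    (hempty : f (∅ : Set (Fin N)) = 0)
    (k : ℝ) (hk : 0 < k) :
    (∀ A : Set (Fin N), IsCircleSep A ∧ f A < k → IsCircleSep Aᶜ ∧ f Aᶜ < k) ∧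
    (∀ A B : Set (Fin N), IsCircleSep A ∧ f A < k → IsCircleSep B ∧ f B < k →
      (IsCircleSep (A ∪ B) ∧ f (A ∪ B) < k) ∨ (IsCircleSep (A ∩ B) ∧ f (A ∩ B) < k)) := by
  refine ⟨fun A ⟨hA, hfA⟩ => ⟨hA.compl, hsymm A ▸ hfA⟩, ?_⟩
  rintro A B ⟨hA, hfA⟩ ⟨hB, hfB⟩
  rcases hA.union_or_inter_eq_empty hB with hU | hI
  · rcases hA.inter_or_union_eq_univ hB with hI | hU'
    · by_cases hfU : f (A ∪ B) < k
      · exact .inl ⟨hU, hfU⟩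
      · exact .inr ⟨hI, by linarith [hsub A B]⟩
    · refine .inl ⟨hU' ▸ isCircleSep_univ, ?_⟩
      rwa [hU', ← compl_empty, ← hsymm, hempty]
  · exact .inr ⟨hI ▸ isCircleSep_empty, by rwa [hI, hempty]⟩
end

section
/- Let S⃗ be a separation system in a universe U, σ ⊆ U, and suppose r, s are two crossing (not nested) separations. Let r⃗₀ be any corner of r and s, i.e. one of r⃗ ∨ s⃗ for some choice of orientations r⃗ of r and s⃗ of s. Then every separation u that is nested with both r and s is also nested with the underlying separation of r⃗₀. -/
/-- The (unoriented) separations underlying `a` and `b` are nested: some orientations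
`a' ∈ {a, star a}` and `b' ∈ {b, star b}` satisfy `a' ≤ b'`. -/
def Nested {α : Type*} [Lattice α] (star : α → α) (a b : α) : Prop :=
  ∃ a' ∈ ({a, star a} : Set α), ∃ b' ∈ ({b, star b} : Set α), a' ≤ b'

lemma mem_pair_cases {α : Type*} (star : α → α) (hinv : ∀ x, star (star x) = x)
    {a b b' : α} (ha : a ∈ ({b, star b} : Set α)) (hb' : b' ∈ ({b, star b} : Set α)) :
    a = b' ∨ a = star b' := by
  rcases ha with ha | ha <;> rcases hb' with hb' | hb' <;>
    simp_all [Set.mem_insert_iff, hinv]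

/-- The fish lemma: if `r` and `s` cross, then every separation `u` nested with both `r`
and `s` is also nested with each corner `r' ⊔ s'` of `r` and `s`. -/
theorem fish_lemma {α : Type*} [Lattice α] (star : α → α)
    (hinv : ∀ x, star (star x) = x) (hanti : ∀ x y : α, x ≤ y → star y ≤ star x)
    (S : Set α) (hSstar : ∀ s ∈ S, star s ∈ S)
    (r s : α) (hr : r ∈ S) (hs : s ∈ S)
    (hcross : ¬ Nested star r s)
    (r' : α) (hr' : r' ∈ ({r, star r} : Set α))
    (s' : α) (hs' : s' ∈ ({s, star s} : Set α))
    (u : α) (hur : Nested star u r) (hus : Nested star u s) :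
    Nested star u (r' ⊔ s') := by
  obtain ⟨u₁, hu₁, r₁, hr₁, h1⟩ := hur
  obtain ⟨u₂, hu₂, s₁, hs₁, h2⟩ := hus
  rcases mem_pair_cases star hinv hr₁ hr' with hrc | hrc
  · -- u₁ ≤ r' ≤ r' ⊔ s'
    exact ⟨u₁, hu₁, r' ⊔ s', Or.inl rfl, (hrc ▸ h1).trans le_sup_left⟩
  rcases mem_pair_cases star hinv hs₁ hs' with hsc | hsc
  · exact ⟨u₂, hu₂, r' ⊔ s', Or.inl rfl, (hsc ▸ h2).trans le_sup_right⟩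
  -- now u₁ ≤ star r', u₂ ≤ star s'
  rw [hrc] at h1
  rw [hsc] at h2
  rcases mem_pair_cases star hinv hu₂ hu₁ with huc | huc
  · -- same orientation: r' ⊔ s' ≤ star u₁
    have hr'le : r' ≤ star u₁ := by
      have := hanti _ _ h1; rwa [hinv] at this
    have hs'le : s' ≤ star u₁ := by
      have := hanti _ _ (huc ▸ h2); rwa [hinv] at this
    have : r' ⊔ s' ≤ star u₁ := sup_le hr'le hs'le
    have h := hanti _ _ this
    rw [hinv] at h
    exact ⟨u₁, hu₁, star (r' ⊔ s'), Or.inr rfl, h⟩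
  · -- opposite orientations: r and s would be nested, contradiction
    exfalso
    apply hcross
    have h2' : star u₁ ≤ star s' := huc ▸ h2
    have hs'u : s' ≤ u₁ := by
      have := hanti _ _ h2'; rwa [hinv, hinv] at this
    have : s' ≤ star r' := hs'u.trans h1
    have hr's : r' ≤ star s' := by
      have := hanti _ _ this; rwa [hinv] at this
    refine ⟨r', hr', star s', ?_, hr's⟩
    rcases hs' with h | h
    · exact Or.inr (h ▸ rfl)
    · exact Or.inl (by rw [h, hinv])
end

section
/- Let U be a universe of separations, S⃗ ⊆ U a separation system, and F ⊆ 2^U a set of stars. If S⃗ is separable and F is closed under shifting in S⃗, then S⃗ is F-separable. -/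
variable {α : Type*}

/-- `r` is trivial in `S`. -/
def IsTrivial [Lattice α] (star : α → α) (S : Set α) (r : α) : Prop :=
  ∃ t ∈ S, r < t ∧ r < star t

/-- `s` emulates `r` in `S`. -/
def Emulates [Lattice α] (star : α → α) (S : Set α) (s r : α) : Prop :=
  r ≤ s ∧ ∀ t ∈ S, t ≠ star r → r ≤ t → s ⊔ t ∈ S

/-- The shift `σₓˢ = {x ⊔ s} ∪ {y ⊓ star s : y ∈ σ \ {x}}`. -/
def Shift [Lattice α] (star : α → α) (σ : Set α) (x s : α) : Set α :=
  insert (x ⊔ s) ((fun y => y ⊓ star s) '' (σ \ {x}))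

/-- `s` emulates `r` in `S` for `F`. -/
def EmulatesFor [Lattice α] (star : α → α) (S : Set α) (F : Set (Set α))
    (s r : α) : Prop :=
  Emulates star S s r ∧
  ∀ σ : Set α, σ ⊆ S \ {star r} → σ ∈ F → ∀ x ∈ σ, r ≤ x → Shift star σ x s ∈ F

/-- Lemma 4.4: if `S` is separable and the set of stars `F` is closed under shifting in
`S`, then `S` is `F`-separable. -/
theorem separable_and_closed_imp_F_separable [Lattice α] (star : α → α)
    (hinv : ∀ x, star (star x) = x) (hanti : ∀ x y : α, x ≤ y → star y ≤ star x)
    (S : Set α) (hSstar : ∀ s ∈ S, star s ∈ S)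
    (F : Set (Set α)) (hFstars : ∀ σ ∈ F, IsStar star σ)
    -- `S` is separable:
    (hsep : ∀ r₁ ∈ S, ∀ r₂ : α, star r₂ ∈ S → r₁ ≤ r₂ →
      ¬ IsTrivial star S r₁ → r₁ ≠ star r₁ →
      ¬ IsTrivial star S (star r₂) → r₂ ≠ star r₂ →
      ∃ s ∈ S, Emulates star S s r₁ ∧ Emulates star S (star s) (star r₂))
    -- `F` is closed under shifting in `S`:
    (hclosed : ∀ r s : α, s ∈ S → r ≤ s →
      ¬ IsTrivial star S r → r ≠ star r → ({star r} : Set α) ∉ F →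
      Emulates star S s r → EmulatesFor star S F s r) :
    -- then `S` is `F`-separable:
    ∀ r₁ ∈ S, ∀ r₂ : α, star r₂ ∈ S → r₁ ≤ r₂ →
      ¬ IsTrivial star S r₁ → r₁ ≠ star r₁ →
      ¬ IsTrivial star S (star r₂) → r₂ ≠ star r₂ →
      ({star r₁} : Set α) ∉ F → ({r₂} : Set α) ∉ F →
      ∃ s ∈ S, EmulatesFor star S F s r₁ ∧ EmulatesFor star S F (star s) (star r₂) := by
  intro r₁ hr₁ r₂ hr₂ hle htriv₁ hdeg₁ htriv₂ hdeg₂ hF₁ hF₂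
  obtain ⟨s, hsS, he₁, he₂⟩ := hsep r₁ hr₁ r₂ hr₂ hle htriv₁ hdeg₁ htriv₂ hdeg₂
  refine ⟨s, hsS, ?_, ?_⟩
  · exact hclosed r₁ s hsS he₁.1 htriv₁ hdeg₁ hF₁ he₁
  · have h2 : ({star (star r₂)} : Set α) ∉ F := by rwa [hinv]
    have hd2 : star r₂ ≠ star (star r₂) := by rw [hinv]; exact fun h => hdeg₂ h.symm
    exact hclosed (star r₂) (star s) (hSstar s hsS) he₂.1 htriv₂ hd2 h2 he₂
end
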